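/- arXiv:2303.15402 — 8 statements merged into one kernel-verified Lean document; each statement's English description precedes it below -/
import Mathlib

section
/- If a triangle has all three vertices in the set S = {(0,0),(1,0)} + 3ℤ², then its area is an integer multiple of 3/2. -/
/-- Embed a lattice point into the plane. -/
def toR (p : ℤ × ℤ) : ℝ × ℝ := ((p.1 : ℝ), (p.2 : ℝ))

/-- Determinant of the 2×2 matrix with columns `u`, `v`. -/
def det2 (u v : ℤ × ℤ) : ℤ := u.1 * v.2 - u.2 * v.1

/-- The set of lattice points in the (closed) triangle with vertices `a b c`. -/
def triPts (a b c : ℤ × ℤ) : Set (ℤ × ℤ) :=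
  {p | toR p ∈ convexHull ℝ {toR a, toR b, toR c}}

/-- A border triangle: a lattice triangle with exactly 4 lattice points, whose
fourth point lies on the boundary (not in the interior). -/
def IsBorderTri (T : Set (ℤ × ℤ)) : Prop :=
  ∃ a b c d : ℤ × ℤ, det2 (b - a) (c - a) ≠ 0 ∧
    T = triPts a b c ∧ T = {a, b, c, d} ∧ T.ncard = 4 ∧
    toR d ∉ interior (convexHull ℝ {toR a, toR b, toR c})

/-- An internal triangle: a lattice triangle with exactly 4 lattice points, whose
fourth point lies in the interior. -/
def IsInternalTri (T : Set (ℤ × ℤ)) : Prop :=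
  ∃ a b c d : ℤ × ℤ, det2 (b - a) (c - a) ≠ 0 ∧
    T = triPts a b c ∧ T = {a, b, c, d} ∧ T.ncard = 4 ∧
    toR d ∈ interior (convexHull ℝ {toR a, toR b, toR c})

/-- `S` is B-stable: no border triangle has exactly three of its points in `S`. -/
def BStable (S : Set (ℤ × ℤ)) : Prop :=
  ∀ T, IsBorderTri T → (T ∩ S).ncard ≠ 3

/-- `S` is I-stable: no internal triangle has exactly three of its points in `S`. -/
def IStable (S : Set (ℤ × ℤ)) : Prop :=
  ∀ T, IsInternalTri T → (T ∩ S).ncard ≠ 3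

/-- Upper density of a subset of `ℤ²`. -/
noncomputable def upperDensity (S : Set (ℤ × ℤ)) : ℝ :=
  Filter.limsup (fun n : ℕ =>
    ((S ∩ Set.Icc (-(n : ℤ), -(n : ℤ)) ((n : ℤ), (n : ℤ))).ncard : ℝ) /
      (2 * (n : ℝ) + 1) ^ 2) Filter.atTop

/-- The set `{(0,0),(1,0)} + 3ℤ²`. -/
def S29 : Set (ℤ × ℤ) := {p | ∃ m k : ℤ, p = (3 * m, 3 * k) ∨ p = (3 * m + 1, 3 * k)}

theorem stmt1 (a b c : ℤ × ℤ) (ha : a ∈ S29) (hb : b ∈ S29) (hc : c ∈ S29) :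
    (3 : ℤ) ∣ det2 (b - a) (c - a) ∧
    ∃ k : ℤ, 0 ≤ k ∧ (|det2 (b - a) (c - a)| : ℝ) / 2 = (k : ℝ) * (3 / 2) := by
  obtain ⟨ma, ka, ha⟩ := ha
  obtain ⟨mb, kb, hb⟩ := hb
  obtain ⟨mc, kc, hc⟩ := hc
  have ha2 : a.2 = 3 * ka := by rcases ha with h | h <;> simp [h]
  have hb2 : b.2 = 3 * kb := by rcases hb with h | h <;> simp [h]
  have hc2 : c.2 = 3 * kc := by rcases hc with h | h <;> simp [h]
  have hdvd : (3 : ℤ) ∣ det2 (b - a) (c - a) := by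
    refine ⟨(b.1 - a.1) * (kc - ka) - (kb - ka) * (c.1 - a.1), ?_⟩
    simp only [det2, Prod.snd_sub, Prod.fst_sub, ha2, hb2, hc2]
    ring
  refine ⟨hdvd, |det2 (b - a) (c - a)| / 3, Int.ediv_nonneg (abs_nonneg _) (by norm_num), ?_⟩
  obtain ⟨t, ht⟩ := (dvd_abs _ _).mpr hdvd
  have htR : (|det2 (b - a) (c - a)| : ℝ) = 3 * t := by exact_mod_cast congrArg Int.cast ht
  rw [ht, Int.mul_ediv_cancel_left _ (by norm_num : (3:ℤ) ≠ 0), htR]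
  ring
end

section
/- Among any three points of the set S = {(0,0),(1,0)} + 3ℤ², at least two are congruent modulo 3ℤ², and hence the line segment joining them contains at least two interior lattice points. Consequently, no internal triangle has all three of its vertices in S. -/
lemma S29_mem_openSeg (p q r : ℤ × ℤ) (m k : ℤ) (hq1 : q.1 = p.1 + 3*m) (hq2 : q.2 = p.2 + 3*k)
    (h : r = (p.1 + m, p.2 + k) ∨ r = (p.1 + 2*m, p.2 + 2*k)) :
    toR r ∈ openSegment ℝ (toR p) (toR q) := by
  rcases h with rfl | rfl
  · refine ⟨2/3, 1/3, by norm_num, by norm_num, by norm_num, ?_⟩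
    simp only [toR, Prod.smul_mk, smul_eq_mul, Prod.mk_add_mk, Prod.mk.injEq, hq1, hq2]
    constructor <;> push_cast <;> ring
  · refine ⟨1/3, 2/3, by norm_num, by norm_num, by norm_num, ?_⟩
    simp only [toR, Prod.smul_mk, smul_eq_mul, Prod.mk_add_mk, Prod.mk.injEq, hq1, hq2]
    constructor <;> push_cast <;> ring

lemma S29_seg_finite (p q : ℤ × ℤ) :
    {r : ℤ × ℤ | toR r ∈ openSegment ℝ (toR p) (toR q)}.Finite := by
  apply Set.Finite.subset (Set.finite_Icc (min p.1 q.1, min p.2 q.2) (max p.1 q.1, max p.2 q.2))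
  rintro r ⟨u, w, hu, hw, huw, heq⟩
  have h1 : u * (p.1 : ℝ) + w * (q.1 : ℝ) = (r.1 : ℝ) := congrArg Prod.fst heq
  have h2 : u * (p.2 : ℝ) + w * (q.2 : ℝ) = (r.2 : ℝ) := congrArg Prod.snd heq
  have hb : ∀ (s t e : ℝ), u * s + w * t = e → min s t ≤ e ∧ e ≤ max s t := by
    intro s t e he
    have k1 : e - s = w * (t - s) := by linear_combination -he + s * huw
    have k2 : t - e = u * (t - s) := by linear_combination he - t * huw
    have k3 : e - t = u * (s - t) := by linear_combination -he + t * huw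
    have k4 : s - e = w * (s - t) := by linear_combination he - s * huw
    rcases le_total s t with h | h
    · rw [min_eq_left h, max_eq_right h]
      have m1 := mul_nonneg hw.le (sub_nonneg.mpr h)
      have m2 := mul_nonneg hu.le (sub_nonneg.mpr h)
      constructor <;> linarith
    · rw [min_eq_right h, max_eq_left h]
      have m1 := mul_nonneg hu.le (sub_nonneg.mpr h)
      have m2 := mul_nonneg hw.le (sub_nonneg.mpr h)
      constructor <;> linarith
  obtain ⟨c1, d1⟩ := hb _ _ _ h1
  obtain ⟨c2, d2⟩ := hb _ _ _ h2
  rw [Set.mem_Icc, Prod.le_def, Prod.le_def]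
  refine ⟨⟨?_, ?_⟩, ?_, ?_⟩ <;> exact_mod_cast (by assumption_mod_cast : _)

lemma S29_perm_det (a b c p q r : ℤ × ℤ) (hp : p = a ∨ p = b ∨ p = c)
    (hq : q = a ∨ q = b ∨ q = c) (hr : r = a ∨ r = b ∨ r = c)
    (hpq : p ≠ q) (hpr : p ≠ r) (hqr : q ≠ r)
    (h : det2 (q - p) (r - p) = 0) : det2 (b - a) (c - a) = 0 := by
  simp only [det2, Prod.fst_sub, Prod.snd_sub] at h ⊢
  rcases hp with rfl | rfl | rfl <;> rcases hq with rfl | rfl | rfl <;>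
    rcases hr with rfl | rfl | rfl <;>
    first
      | exact absurd rfl hpq
      | exact absurd rfl hpr
      | exact absurd rfl hqr
      | linear_combination h
      | linear_combination -h

lemma S29_pigeon (x y z : ℤ × ℤ) (hx : x ∈ S29) (hy : y ∈ S29) (hz : z ∈ S29)
    (hxy : x ≠ y) (hxz : x ≠ z) (hyz : y ≠ z) :
    ∃ p q : ℤ × ℤ, p ≠ q ∧ p ∈ ({x, y, z} : Set (ℤ × ℤ)) ∧ q ∈ ({x, y, z} : Set (ℤ × ℤ)) ∧
      (3 : ℤ) ∣ (p.1 - q.1) ∧ (3 : ℤ) ∣ (p.2 - q.2) := by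
  have key : ∀ v : ℤ × ℤ, v ∈ S29 → (v.1 % 3 = 0 ∨ v.1 % 3 = 1) ∧ v.2 % 3 = 0 := by
    rintro v ⟨m, k, rfl | rfl⟩ <;> constructor <;> simp <;> omega
  obtain ⟨hx1, hx2⟩ := key x hx
  obtain ⟨hy1, hy2⟩ := key y hy
  obtain ⟨hz1, hz2⟩ := key z hz
  rcases hx1 with hx1 | hx1 <;> rcases hy1 with hy1 | hy1 <;> rcases hz1 with hz1 | hz1 <;>
    first
      | exact ⟨x, y, hxy, by simp, by simp, by omega, by omega⟩
      | exact ⟨x, z, hxz, by simp, by simp, by omega, by omega⟩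
      | exact ⟨y, z, hyz, by simp, by simp, by omega, by omega⟩

theorem stmt2 :
    (∀ x y z : ℤ × ℤ, x ∈ S29 → y ∈ S29 → z ∈ S29 → x ≠ y → x ≠ z → y ≠ z →
      ∃ p q : ℤ × ℤ, p ≠ q ∧ p ∈ ({x, y, z} : Set (ℤ × ℤ)) ∧
        q ∈ ({x, y, z} : Set (ℤ × ℤ)) ∧
        (3 : ℤ) ∣ (p.1 - q.1) ∧ (3 : ℤ) ∣ (p.2 - q.2) ∧
        2 ≤ {r : ℤ × ℤ | toR r ∈ openSegment ℝ (toR p) (toR q)}.ncard) ∧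
    (∀ T : Set (ℤ × ℤ), ∀ a b c d : ℤ × ℤ, det2 (b - a) (c - a) ≠ 0 →
      T = triPts a b c → T = {a, b, c, d} → T.ncard = 4 →
      toR d ∈ interior (convexHull ℝ {toR a, toR b, toR c}) →
      ¬(a ∈ S29 ∧ b ∈ S29 ∧ c ∈ S29)) := by
  constructor
  · intro x y z hx hy hz hxy hxz hyz
    obtain ⟨p, q, hpq, hp, hq, hd1, hd2⟩ := S29_pigeon x y z hx hy hz hxy hxz hyz
    obtain ⟨m, hm⟩ : ∃ m, q.1 = p.1 + 3 * m := by
      obtain ⟨m, hm⟩ := hd1; exact ⟨-m, by omega⟩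
    obtain ⟨k, hk⟩ : ∃ k, q.2 = p.2 + 3 * k := by
      obtain ⟨k, hk⟩ := hd2; exact ⟨-k, by omega⟩
    have hmk : ¬(m = 0 ∧ k = 0) := by
      rintro ⟨rfl, rfl⟩
      exact hpq (Prod.ext_iff.mpr ⟨by omega, by omega⟩)
    have hr12 : ((p.1 + m, p.2 + k) : ℤ × ℤ) ≠ (p.1 + 2*m, p.2 + 2*k) := by
      intro h
      rw [Prod.mk.injEq] at h
      omega
    refine ⟨p, q, hpq, hp, hq, hd1, hd2, ?_⟩
    have hsub : ({(p.1 + m, p.2 + k), (p.1 + 2*m, p.2 + 2*k)} : Set (ℤ × ℤ)) ⊆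
        {r : ℤ × ℤ | toR r ∈ openSegment ℝ (toR p) (toR q)} := by
      rintro r (rfl | rfl)
      · exact S29_mem_openSeg p q _ m k hm hk (Or.inl rfl)
      · exact S29_mem_openSeg p q _ m k hm hk (Or.inr rfl)
    calc (2 : ℕ) = ({(p.1 + m, p.2 + k), (p.1 + 2*m, p.2 + 2*k)} : Set (ℤ × ℤ)).ncard :=
          (Set.ncard_pair hr12).symm
      _ ≤ _ := Set.ncard_le_ncard hsub (S29_seg_finite p q)
  · intro T a b c d hdet hT1 hT2 hT4 hdint
    rintro ⟨ha, hb, hc⟩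
    have hab : a ≠ b := by rintro rfl; exact hdet (by simp [det2])
    have hac : a ≠ c := by rintro rfl; exact hdet (by simp [det2])
    have hbc : b ≠ c := by rintro rfl; exact hdet (by simp only [det2]; ring)
    obtain ⟨p, q, hpq, hp, hq, hd1, hd2⟩ := S29_pigeon a b c ha hb hc hab hac hbc
    simp only [Set.mem_insert_iff, Set.mem_singleton_iff] at hp hq
    obtain ⟨m, hm⟩ : ∃ m, q.1 = p.1 + 3 * m := by
      obtain ⟨m, hm⟩ := hd1; exact ⟨-m, by omega⟩
    obtain ⟨k, hk⟩ : ∃ k, q.2 = p.2 + 3 * k := by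
      obtain ⟨k, hk⟩ := hd2; exact ⟨-k, by omega⟩
    have hmk : ¬(m = 0 ∧ k = 0) := by
      rintro ⟨rfl, rfl⟩
      exact hpq (Prod.ext_iff.mpr ⟨by omega, by omega⟩)
    have hsubseg : openSegment ℝ (toR p) (toR q) ⊆ convexHull ℝ {toR a, toR b, toR c} := by
      intro s hs
      have h1 : segment ℝ (toR p) (toR q) ⊆ convexHull ℝ {toR a, toR b, toR c} := by
        rw [← convexHull_pair]
        apply convexHull_mono
        rintro s' (rfl | rfl)
        · rcases hp with rfl | rfl | rfl <;> simp
        · rcases hq with rfl | rfl | rfl <;> simp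
      exact h1 (openSegment_subset_segment ℝ _ _ hs)
    have key : ∀ r : ℤ × ℤ, r = (p.1 + m, p.2 + k) ∨ r = (p.1 + 2*m, p.2 + 2*k) → r = d := by
      intro r hr
      have hrT : r ∈ T := by
        rw [hT1, triPts, Set.mem_setOf_eq]
        exact hsubseg (S29_mem_openSeg p q r m k hm hk hr)
      have hrp : r ≠ p := by
        rcases hr with rfl | rfl <;> (intro h; rw [Prod.ext_iff] at h; simp at h; omega)
      have hrq : r ≠ q := by
        rcases hr with rfl | rfl <;> (intro h; rw [Prod.ext_iff] at h; simp [hm, hk] at h; omega)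
      have hdz : det2 (q - p) (r - p) = 0 := by
        rcases hr with rfl | rfl <;>
          (simp only [det2, Prod.fst_sub, Prod.snd_sub, hm, hk]; ring)
      have hmem : r ∈ ({a, b, c, d} : Set (ℤ × ℤ)) := hT2 ▸ hrT
      simp only [Set.mem_insert_iff, Set.mem_singleton_iff] at hmem
      rcases hmem with h | h | h | h
      · exact absurd (S29_perm_det a b c p q r hp hq (Or.inl h) hpq hrp.symm hrq.symm hdz) hdet
      · exact absurd (S29_perm_det a b c p q r hp hq (Or.inr (Or.inl h)) hpq hrp.symm hrq.symm hdz) hdet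
      · exact absurd (S29_perm_det a b c p q r hp hq (Or.inr (Or.inr h)) hpq hrp.symm hrq.symm hdz) hdet
      · exact h
    have e1 : ((p.1 + m, p.2 + k) : ℤ × ℤ) = d := key _ (Or.inl rfl)
    have e2 : ((p.1 + 2*m, p.2 + 2*k) : ℤ × ℤ) = d := key _ (Or.inr rfl)
    have e3 : ((p.1 + m, p.2 + k) : ℤ × ℤ) = (p.1 + 2*m, p.2 + 2*k) := e1.trans e2.symm
    rw [Prod.mk.injEq] at e3
    omega
end

section
/- Let B = {(1,0),(0,1),(−1,−1)} + 6ℤ². For any three points x, y, z ∈ B forming a triangle (i.e., not collinear), the determinant det(y−x, z−x) is congruent to 0 or ±3 modulo 6; in particular this determinant is never ±1 or ±2, so x, y, z are not contained in any triangle of area 1/2 or 1. -/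
/-- The set `{(1,0),(0,1),(−1,−1)} + 6ℤ²`. -/
def BSet : Set (ℤ × ℤ) :=
  {p | ∃ m k : ℤ, p = (1 + 6 * m, 6 * k) ∨ p = (6 * m, 1 + 6 * k) ∨
    p = (-1 + 6 * m, -1 + 6 * k)}

lemma coeffs' {A B C p : ℝ × ℝ} (hp : p ∈ convexHull ℝ {A, B, C}) :
    ∃ β γ : ℝ, 0 ≤ β ∧ 0 ≤ γ ∧ β + γ ≤ 1 ∧ p = A + β • (B - A) + γ • (C - A) := by
  rw [convexHull_insert ⟨B, by simp⟩, convexHull_pair, mem_convexJoin] at hp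
  obtain ⟨a, ha, q, hq, hpq⟩ := hp
  rw [Set.mem_singleton_iff] at ha
  subst ha
  obtain ⟨u, v, hu, hv, huv, hq⟩ := hq
  obtain ⟨s, t, hs, ht, hst, hp⟩ := hpq
  refine ⟨t * u, t * v, by positivity, by positivity, by nlinarith, ?_⟩
  rw [← hp, ← hq]
  ext
  · simp [Prod.smul_def]; ring_nf; linear_combination a.1 * hst + a.1 * t * huv
  · simp [Prod.smul_def]; ring_nf; linear_combination a.2 * hst + a.2 * t * huv

lemma Ebound' {p q r s v w : ℝ} (hp : 0 ≤ p) (hq : 0 ≤ q) (hr : 0 ≤ r) (hs : 0 ≤ s)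
    (hv : 0 ≤ v) (hw : 0 ≤ w) (h1 : p + q ≤ 1) (h2 : r + s ≤ 1) (h3 : v + w ≤ 1) :
    |(r - p) * (w - q) - (s - q) * (v - p)| ≤ 1 := by
  rw [abs_le]
  constructor <;> nlinarith [mul_nonneg hr hw, mul_nonneg hs hv, mul_nonneg hp hs,
    mul_nonneg hq hr, mul_nonneg hp hw, mul_nonneg hq hv, mul_nonneg hr hq,
    mul_nonneg (mul_nonneg hp hq) hr, sub_nonneg.2 h1, sub_nonneg.2 h2, sub_nonneg.2 h3,
    mul_nonneg (sub_nonneg.2 h1) hr, mul_nonneg (sub_nonneg.2 h1) hs,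
    mul_nonneg (sub_nonneg.2 h2) hv, mul_nonneg (sub_nonneg.2 h2) hw,
    mul_nonneg (sub_nonneg.2 h3) hp, mul_nonneg (sub_nonneg.2 h3) hq,
    mul_nonneg (mul_nonneg (sub_nonneg.2 h1) (sub_nonneg.2 h2)) (sub_nonneg.2 h3),
    mul_nonneg (mul_nonneg (sub_nonneg.2 h1) hs) hv,
    mul_nonneg (mul_nonneg (sub_nonneg.2 h2) hq) hv,
    mul_nonneg (mul_nonneg (sub_nonneg.2 h3) hp) hs,
    mul_nonneg (mul_nonneg (sub_nonneg.2 h1) hr) hw,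
    mul_nonneg (mul_nonneg (sub_nonneg.2 h2) hp) hw,
    mul_nonneg (mul_nonneg (sub_nonneg.2 h3) hq) hr]

lemma bset_sum {x : ℤ × ℤ} (hx : x ∈ BSet) : ∃ u : ℤ, x.1 + x.2 = 1 + 3 * u := by
  obtain ⟨m, k, h | h | h⟩ := hx <;> subst h
  · exact ⟨2 * m + 2 * k, by ring⟩
  · exact ⟨2 * m + 2 * k, by ring⟩
  · exact ⟨2 * m + 2 * k - 1, by ring⟩

theorem stmt3 (x y z : ℤ × ℤ) (hx : x ∈ BSet) (hy : y ∈ BSet) (hz : z ∈ BSet)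
    (h : det2 (y - x) (z - x) ≠ 0) :
    (det2 (y - x) (z - x) % 6 = 0 ∨ det2 (y - x) (z - x) % 6 = 3) ∧
    det2 (y - x) (z - x) ≠ 1 ∧ det2 (y - x) (z - x) ≠ -1 ∧
    det2 (y - x) (z - x) ≠ 2 ∧ det2 (y - x) (z - x) ≠ -2 ∧
    (∀ a b c : ℤ × ℤ,
      ((det2 (b - a) (c - a)).natAbs = 1 ∨ (det2 (b - a) (c - a)).natAbs = 2) →
      ¬({x, y, z} ⊆ triPts a b c)) := by
  obtain ⟨ux, hux⟩ := bset_sum hx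
  obtain ⟨uy, huy⟩ := bset_sum hy
  obtain ⟨uz, huz⟩ := bset_sum hz
  have hdvd : (3 : ℤ) ∣ det2 (y - x) (z - x) := by
    refine ⟨(uy - ux) * (z.2 - x.2) - (uz - ux) * (y.2 - x.2), ?_⟩
    simp only [det2, Prod.fst_sub, Prod.snd_sub]
    linear_combination (z.2 - x.2) * huy - (z.2 - x.2) * hux - (y.2 - x.2) * huz
      + (y.2 - x.2) * hux
  obtain ⟨t, ht⟩ := hdvd
  refine ⟨by omega, by omega, by omega, by omega, by omega, ?_⟩
  intro a b c hdet hsub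
  have hX : toR x ∈ convexHull ℝ {toR a, toR b, toR c} := hsub (by simp)
  have hY : toR y ∈ convexHull ℝ {toR a, toR b, toR c} := hsub (by simp)
  have hZ : toR z ∈ convexHull ℝ {toR a, toR b, toR c} := hsub (by simp)
  obtain ⟨bx, gx, hbx, hgx, hsx, hex⟩ := coeffs' hX
  obtain ⟨by', gy, hby, hgy, hsy, hey⟩ := coeffs' hY
  obtain ⟨bz, gz, hbz, hgz, hsz, hez⟩ := coeffs' hZ
  have hx1 : (x.1 : ℝ) = a.1 + bx * ((b.1 : ℝ) - a.1) + gx * ((c.1 : ℝ) - a.1) := by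
    have := congrArg Prod.fst hex; simpa [toR, Prod.smul_def] using this
  have hx2 : (x.2 : ℝ) = a.2 + bx * ((b.2 : ℝ) - a.2) + gx * ((c.2 : ℝ) - a.2) := by
    have := congrArg Prod.snd hex; simpa [toR, Prod.smul_def] using this
  have hy1 : (y.1 : ℝ) = a.1 + by' * ((b.1 : ℝ) - a.1) + gy * ((c.1 : ℝ) - a.1) := by
    have := congrArg Prod.fst hey; simpa [toR, Prod.smul_def] using this
  have hy2 : (y.2 : ℝ) = a.2 + by' * ((b.2 : ℝ) - a.2) + gy * ((c.2 : ℝ) - a.2) := by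
    have := congrArg Prod.snd hey; simpa [toR, Prod.smul_def] using this
  have hz1 : (z.1 : ℝ) = a.1 + bz * ((b.1 : ℝ) - a.1) + gz * ((c.1 : ℝ) - a.1) := by
    have := congrArg Prod.fst hez; simpa [toR, Prod.smul_def] using this
  have hz2 : (z.2 : ℝ) = a.2 + bz * ((b.2 : ℝ) - a.2) + gz * ((c.2 : ℝ) - a.2) := by
    have := congrArg Prod.snd hez; simpa [toR, Prod.smul_def] using this
  have key : ((det2 (y - x) (z - x) : ℤ) : ℝ) =
      ((by' - bx) * (gz - gx) - (gy - gx) * (bz - bx)) * ((det2 (b - a) (c - a) : ℤ) : ℝ) := by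
    simp only [det2, Prod.fst_sub, Prod.snd_sub]
    push_cast
    rw [hx1, hx2, hy1, hy2, hz1, hz2]
    ring
  have hE := Ebound' hbx hgx hby hgy hbz hgz hsx hsy hsz
  have habs : |((det2 (y - x) (z - x) : ℤ) : ℝ)| ≤ |((det2 (b - a) (c - a) : ℤ) : ℝ)| := by
    rw [key, abs_mul]
    have h2 : (0 : ℝ) ≤ |((det2 (b - a) (c - a) : ℤ) : ℝ)| := abs_nonneg _
    nlinarith [hE]
  rw [← Int.cast_abs, ← Int.cast_abs, Int.cast_le] at habs
  rw [Int.abs_eq_natAbs, Int.abs_eq_natAbs] at habs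
  rcases hdet with h1 | h1 <;> omega
end

section
/- Every internal triangle in ℤ² consists of its three vertices and its centroid; that is, if T = {a, b, c, d} is an internal triangle with vertices a, b, c and interior point d, then 3d = a + b + c. -/
/-!
The interior point `d` cuts the triangle into `dbc`, `dca`, `dab`, whose doubled signed areas
`det2` all have the orientation of `abc`. A lattice triangle of doubled area at least 2 contains a
further lattice point: the lattice spanned by its edge vectors has index equal to that area, and a
point outside it, reduced into the fundamental parallelogram and reflected through its centre if
necessary, lands in the triangle. For `dbc` that point could only be `a`, which lies on the other
side of the line `cd`. So the three subtriangles have doubled area `±1` with a common sign, and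
equal barycentric weights make `d` the centroid.
-/

open Set Topology

def det2R (u v : ℝ × ℝ) : ℝ := u.1 * v.2 - u.2 * v.1

lemma det2R_sub_add_smul (b c x w : ℝ × ℝ) (t : ℝ) :
    det2R (b - (x + t • w)) (c - (x + t • w)) = det2R (b - x) (c - x) + t * det2R (c - b) w := by
  simp only [det2R, Prod.fst_sub, Prod.snd_sub, Prod.fst_add, Prod.snd_add, Prod.smul_fst,
    Prod.smul_snd, smul_eq_mul]
  ring

lemma convexHull_subset_det2R_mul_nonneg (a b c : ℝ × ℝ) :
    convexHull ℝ {a, b, c} ⊆ {x | 0 ≤ det2R (b - x) (c - x) * det2R (b - a) (c - a)} := by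
  refine convexHull_min ?_ ?_
  · rintro x (rfl | rfl | rfl)
    · exact mul_self_nonneg (det2R (b - _) (c - _))
    all_goals simp [det2R]
  · intro y hy z hz α β hα hβ hαβ
    have hα' : α = 1 - β := by linarith
    subst hα'
    have hyz : (1 - β) • y + β • z = y + β • (z - y) := by module
    have hz' := det2R_sub_add_smul b c y (z - y) 1
    simp only [one_smul, add_sub_cancel, one_mul] at hz'
    simp only [mem_ofPred_eq, hyz, det2R_sub_add_smul, hz'] at hy hz ⊢
    nlinarith [mul_nonneg hα hy, mul_nonneg hβ hz]

lemma det2R_mul_pos_of_mem_interior {a b c x : ℝ × ℝ} (habc : det2R (b - a) (c - a) ≠ 0)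
    (hx : x ∈ interior (convexHull ℝ {a, b, c})) :
    0 < det2R (b - x) (c - x) * det2R (b - a) (c - a) := by
  set K := det2R (b - a) (c - a)
  -- Push `x` against the gradient of `y ↦ det2R (b - y) (c - y) * K`, staying inside the hull.
  set w : ℝ × ℝ := K • (-(c - b).2, (c - b).1)
  have hbc : (c - b).1 ^ 2 + (c - b).2 ^ 2 ≠ 0 := by
    intro h
    have h1 : c.1 = b.1 := by
      nlinarith [sq_nonneg (c - b).1, sq_nonneg (c - b).2, Prod.fst_sub c b]
    have h2 : c.2 = b.2 := by
      nlinarith [sq_nonneg (c - b).1, sq_nonneg (c - b).2, Prod.snd_sub c b]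
    exact habc (by simp only [K, det2R, Prod.fst_sub, Prod.snd_sub, h1, h2]; ring)
  have hw : det2R (c - b) w = K * ((c - b).1 ^ 2 + (c - b).2 ^ 2) := by
    simp only [w, det2R, Prod.smul_fst, Prod.smul_snd, smul_eq_mul]; ring
  have hev : ∀ᶠ t in 𝓝 (0 : ℝ), x + t • w ∈ convexHull ℝ {a, b, c} := by
    refine (Continuous.continuousAt (by fun_prop)).preimage_mem_nhds ?_
    simpa using mem_interior_iff_mem_nhds.1 hx
  obtain ⟨t, hmem, ht⟩ := ((hev.filter_mono nhdsWithin_le_nhds).and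
    (self_mem_nhdsWithin : Iio (0 : ℝ) ∈ 𝓝[<] 0)).exists
  have hnn := convexHull_subset_det2R_mul_nonneg a b c hmem
  rw [mem_ofPred_eq, det2R_sub_add_smul, hw] at hnn
  have hN : 0 < K ^ 2 * ((c - b).1 ^ 2 + (c - b).2 ^ 2) := by positivity
  nlinarith [ht]

lemma toR_add (p q : ℤ × ℤ) : toR (p + q) = toR p + toR q := by
  simp [toR]

lemma toR_sub (p q : ℤ × ℤ) : toR (p - q) = toR p - toR q := by
  simp [toR]

lemma toR_zsmul (k : ℤ) (p : ℤ × ℤ) : toR (k • p) = (k : ℝ) • toR p := by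
  simp [toR]

lemma det2R_toR (u v : ℤ × ℤ) : det2R (toR u) (toR v) = det2 u v := by
  simp [det2R, toR, det2]

lemma det2_mul_nonneg_of_mem_convexHull {a b c x : ℤ × ℤ}
    (hx : toR x ∈ convexHull ℝ {toR a, toR b, toR c}) :
    0 ≤ det2 (b - x) (c - x) * det2 (b - a) (c - a) := by
  have := convexHull_subset_det2R_mul_nonneg _ _ _ hx
  simp only [mem_ofPred_eq, ← toR_sub, det2R_toR] at this
  exact_mod_cast this

lemma det2_mul_pos_of_mem_interior {a b c x : ℤ × ℤ} (habc : det2 (b - a) (c - a) ≠ 0)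
    (hx : toR x ∈ interior (convexHull ℝ {toR a, toR b, toR c})) :
    0 < det2 (b - x) (c - x) * det2 (b - a) (c - a) := by
  have := det2R_mul_pos_of_mem_interior
    (by rwa [← toR_sub, ← toR_sub, det2R_toR, Int.cast_ne_zero]) hx
  simp only [← toR_sub, det2R_toR] at this
  exact_mod_cast this

lemma smul_det2_eq (u v q : ℤ × ℤ) : det2 u v • q = det2 q v • u + det2 u q • v := by
  ext <;> simp [det2] <;> ring

lemma exists_notMem_closure_pair {u v : ℤ × ℤ} (h : |det2 u v| ≠ 1) :
    ∃ q, q ∉ AddSubgroup.closure {u, v} := by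
  by_contra! hall
  obtain ⟨m₁, n₁, h₁⟩ := AddSubgroup.mem_closure_pair.1 (hall (1, 0))
  obtain ⟨m₂, n₂, h₂⟩ := AddSubgroup.mem_closure_pair.1 (hall (0, 1))
  have hdet := congrArg₂ det2 h₁ h₂
  simp only [det2, Prod.fst_add, Prod.snd_add, Prod.smul_fst, Prod.smul_snd, smul_eq_mul] at hdet
  refine h (Int.isUnit_iff_abs_eq.1 (IsUnit.of_mul_eq_one (m₁ * n₂ - n₁ * m₂) ?_))
  simp only [det2]
  linear_combination hdet

lemma exists_notMem_closure_pair_smul_eq {u v q : ℤ × ℤ} (hk : det2 u v ≠ 0)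
    (hq : q ∉ AddSubgroup.closure {u, v}) :
    ∃ p ∉ AddSubgroup.closure {u, v}, ∃ r s : ℤ, 0 ≤ r ∧ r < |det2 u v| ∧ 0 ≤ s ∧
      s < |det2 u v| ∧ |det2 u v| • p = r • u + s • v := by
  set K := |det2 u v|
  set A := (det2 u v).sign * det2 q v
  set B := (det2 u v).sign * det2 u q
  have hK0 : K ≠ 0 := abs_ne_zero.2 hk
  have hKq : K • q = A • u + B • v := by
    rw [show K = (det2 u v).sign * det2 u v by rw [Int.sign_mul_self, Int.natCast_natAbs],
      mul_smul, smul_det2_eq, smul_add, smul_smul, smul_smul]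
  set H := AddSubgroup.closure {u, v}
  have hu : u ∈ H := AddSubgroup.subset_closure (by simp)
  have hv : v ∈ H := AddSubgroup.subset_closure (by simp)
  refine ⟨q - (A / K) • u - (B / K) • v, fun hp => hq ?_, A % K, B % K,
    Int.emod_nonneg A hK0, Int.emod_lt_of_pos A (abs_pos.2 hk),
    Int.emod_nonneg B hK0, Int.emod_lt_of_pos B (abs_pos.2 hk), ?_⟩
  · convert H.add_mem (H.add_mem hp (H.zsmul_mem hu (A / K))) (H.zsmul_mem hv (B / K)) using 1
    abel
  · rw [Int.emod_def, Int.emod_def, smul_sub, smul_sub, hKq]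
    module

lemma exists_notMem_closure_pair_smul_eq_of_add_le {u v p : ℤ × ℤ} {K r s : ℤ}
    (hp : p ∉ AddSubgroup.closure {u, v}) (hr₀ : 0 ≤ r) (hr : r < K) (hs₀ : 0 ≤ s) (hs : s < K)
    (h : K • p = r • u + s • v) :
    ∃ w ∉ AddSubgroup.closure {u, v}, ∃ r' s' : ℤ, 0 ≤ r' ∧ 0 ≤ s' ∧ r' + s' ≤ K ∧
      K • w = r' • u + s' • v := by
  by_cases hrs : r + s ≤ K
  · exact ⟨p, hp, r, s, hr₀, hs₀, hrs, h⟩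
  -- Otherwise reflect through the centre of the parallelogram spanned by `u` and `v`.
  set H := AddSubgroup.closure {u, v}
  have huv : u + v ∈ H := H.add_mem (AddSubgroup.subset_closure (by simp))
    (AddSubgroup.subset_closure (by simp))
  refine ⟨u + v - p, fun hw => hp ?_, K - r, K - s, by omega, by omega, by omega, ?_⟩
  · simpa using H.sub_mem huv hw
  · rw [smul_sub, h]
    module

lemma add_smul_add_smul_mem_convexHull {E : Type*} [AddCommGroup E] [Module ℝ E] (x u v : E)
    {α β : ℝ} (hα : 0 ≤ α) (hβ : 0 ≤ β) (hαβ : α + β ≤ 1) :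
    x + α • u + β • v ∈ convexHull ℝ {x, x + u, x + v} := by
  have := (convex_convexHull ℝ {x, x + u, x + v}).sum_mem (t := Finset.univ)
    (w := ![1 - α - β, α, β]) (z := ![x, x + u, x + v])
    (fun i _ => by fin_cases i <;> simp <;> linarith) (by simp [Fin.sum_univ_three]; ring)
    (fun i _ => by fin_cases i <;> exact subset_convexHull ℝ _ (by simp))
  convert this using 1
  simp [Fin.sum_univ_three]
  module

lemma toR_add_mem_convexHull_of_smul_eq (x u v w : ℤ × ℤ) {K r s : ℤ} (hK : 0 < K)
    (hr : 0 ≤ r) (hs : 0 ≤ s) (hrs : r + s ≤ K) (h : K • w = r • u + s • v) :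
    toR (x + w) ∈ convexHull ℝ {toR x, toR (x + u), toR (x + v)} := by
  have hKR : (0 : ℝ) < K := by exact_mod_cast hK
  have hw : toR w = ((r : ℝ) / K) • toR u + ((s : ℝ) / K) • toR v := by
    have h' := congrArg toR h
    rw [toR_zsmul, toR_add, toR_zsmul, toR_zsmul] at h'
    rw [← inv_smul_smul₀ hKR.ne' (toR w), h']
    module
  rw [toR_add, toR_add, toR_add, hw, ← add_assoc]
  exact add_smul_add_smul_mem_convexHull _ _ _ (by positivity) (by positivity)
    (by rw [← add_div, div_le_one hKR]; exact_mod_cast hrs)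

theorem exists_mem_convexHull_of_two_le_abs_det2 (x y z : ℤ × ℤ)
    (h : 2 ≤ |det2 (y - x) (z - x)|) :
    ∃ p, p ≠ x ∧ p ≠ y ∧ p ≠ z ∧ toR p ∈ convexHull ℝ {toR x, toR y, toR z} := by
  set u := y - x
  set v := z - x
  set H := AddSubgroup.closure {u, v}
  have hk : det2 u v ≠ 0 := fun h0 => by simp [h0] at h
  obtain ⟨q, hq⟩ := exists_notMem_closure_pair (u := u) (v := v) (by omega)
  obtain ⟨p, hp, r, s, hr₀, hr, hs₀, hs, hrs⟩ := exists_notMem_closure_pair_smul_eq hk hq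
  obtain ⟨w, hw, r', s', hr', hs', hrs', hK⟩ :=
    exists_notMem_closure_pair_smul_eq_of_add_le hp hr₀ hr hs₀ hs hrs
  have hu : u ∈ H := AddSubgroup.subset_closure (by simp)
  have hv : v ∈ H := AddSubgroup.subset_closure (by simp)
  refine ⟨x + w, fun hx => hw ?_, fun hy => hw ?_, fun hz => hw ?_, ?_⟩
  · simp [add_eq_left.1 hx]
  · exact eq_sub_of_add_eq' hy ▸ hu
  · exact eq_sub_of_add_eq' hz ▸ hv
  · simpa [u, v] using toR_add_mem_convexHull_of_smul_eq x u v w (abs_pos.2 hk) hr' hs' hrs' hK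

lemma det2_rotate (a b c : ℤ × ℤ) : det2 (c - b) (a - b) = det2 (b - a) (c - a) := by
  simp only [det2, Prod.fst_sub, Prod.snd_sub]; ring

lemma Set.insert_insert_singleton_rotate {α : Type*} (x y z : α) :
    ({y, z, x} : Set α) = {x, y, z} := by
  ext; simp only [mem_insert_iff, mem_singleton_iff]; tauto

lemma triPts_rotate (a b c : ℤ × ℤ) : triPts b c a = triPts a b c := by
  simp only [triPts, Set.insert_insert_singleton_rotate]

lemma abs_det2_eq_one {a b c d : ℤ × ℤ} (hT : triPts a b c ⊆ insert d {a, b, c})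
    (hd : toR d ∈ convexHull ℝ {toR a, toR b, toR c})
    (hpos : 0 < det2 (b - d) (c - d) * det2 (c - d) (a - d)) :
    |det2 (b - d) (c - d)| = 1 := by
  by_contra hne
  have h2 : 2 ≤ |det2 (b - d) (c - d)| := by
    have := abs_pos.2 (left_ne_zero_of_mul hpos.ne')
    omega
  obtain ⟨p, hpd, hpb, hpc, hp⟩ := exists_mem_convexHull_of_two_le_abs_det2 d b c h2
  have hsub : convexHull ℝ {toR d, toR b, toR c} ⊆ convexHull ℝ {toR a, toR b, toR c} :=
    convexHull_min (insert_subset_iff.2 ⟨hd, (subset_insert _ _).trans (subset_convexHull ℝ _)⟩)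
      (convex_convexHull ℝ _)
  obtain rfl : p = a := by
    rcases hT (hsub hp) with h | h | h | h <;> simp_all
  -- `p = a` lies on the side of the line `cd` containing `b`, but `hpos` separates `a` from `b`.
  have hside := det2_mul_nonneg_of_mem_convexHull (a := b) (b := c) (c := d) (x := p)
    (by rwa [Set.insert_insert_singleton_rotate])
  have e : det2 (c - p) (d - p) * det2 (c - b) (d - b) =
      -(det2 (b - d) (c - d) * det2 (c - d) (p - d)) := by
    simp only [det2, Prod.fst_sub, Prod.snd_sub]; ring
  linarith

lemma det2_sub_eq_sign {a b c d : ℤ × ℤ} (habc : det2 (b - a) (c - a) ≠ 0)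
    (hT : triPts a b c ⊆ insert d {a, b, c})
    (hd : toR d ∈ interior (convexHull ℝ {toR a, toR b, toR c})) :
    det2 (b - d) (c - d) = (det2 (b - a) (c - a)).sign := by
  have h₁ := det2_mul_pos_of_mem_interior habc hd
  have h₂ := det2_mul_pos_of_mem_interior (a := b) (b := c) (c := a) (by rwa [det2_rotate])
    (by rwa [Set.insert_insert_singleton_rotate])
  rw [det2_rotate a b c] at h₂
  have h₁₂ : 0 < det2 (b - d) (c - d) * det2 (c - d) (a - d) := by
    have := mul_pos h₁ h₂
    nlinarith [mul_self_pos.2 habc]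
  rcases (abs_eq zero_le_one).1 (abs_det2_eq_one hT (interior_subset hd) h₁₂) with h | h
  · rw [h, Int.sign_eq_one_of_pos (by nlinarith)]
  · rw [h, Int.sign_eq_neg_one_of_neg (by nlinarith)]

lemma det2_smul_add_eq (a b c d : ℤ × ℤ) :
    det2 (b - d) (c - d) • a + det2 (c - d) (a - d) • b + det2 (a - d) (b - d) • c =
      det2 (b - a) (c - a) • d := by
  ext <;> simp only [det2, Prod.fst_sub, Prod.snd_sub, Prod.fst_add, Prod.snd_add,
    Prod.smul_fst, Prod.smul_snd, smul_eq_mul] <;> ring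

lemma three_smul_eq_add_of_det2_eq {a b c d : ℤ × ℤ}
    (h₁ : det2 (b - d) (c - d) = det2 (a - d) (b - d))
    (h₂ : det2 (c - d) (a - d) = det2 (a - d) (b - d)) (h₀ : det2 (a - d) (b - d) ≠ 0) :
    (3 : ℤ) • d = a + b + c := by
  have hk : det2 (b - a) (c - a) = det2 (a - d) (b - d) * 3 := by
    simp only [det2, Prod.fst_sub, Prod.snd_sub] at h₁ h₂ ⊢
    linear_combination h₁ + h₂
  have h := det2_smul_add_eq a b c d
  rw [h₁, h₂, hk, ← smul_add, ← smul_add, mul_smul] at h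
  exact smul_right_injective _ h₀ h.symm

theorem stmt5_general (T : Set (ℤ × ℤ)) (a b c d : ℤ × ℤ)
    (hnc : det2 (b - a) (c - a) ≠ 0) (hT : T = triPts a b c)
    (hT4 : T = {a, b, c, d})
    (hd : toR d ∈ interior (convexHull ℝ {toR a, toR b, toR c})) :
    (3 : ℤ) • d = a + b + c := by
  have hsub : triPts a b c ⊆ insert d {a, b, c} := by
    rw [← hT, hT4]
    intro p
    simp only [mem_insert_iff, mem_singleton_iff]
    tauto
  have e₁ := det2_sub_eq_sign hnc hsub hd
  have e₂ := det2_sub_eq_sign (a := b) (b := c) (c := a) (by rwa [det2_rotate])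
    (by rwa [triPts_rotate, Set.insert_insert_singleton_rotate])
    (by rwa [Set.insert_insert_singleton_rotate])
  have e₃ := det2_sub_eq_sign (a := c) (b := a) (c := b) (by rwa [← det2_rotate])
    (by rwa [← triPts_rotate, ← Set.insert_insert_singleton_rotate])
    (by rwa [← Set.insert_insert_singleton_rotate])
  rw [det2_rotate a b c] at e₂
  rw [det2_rotate b c a, det2_rotate a b c] at e₃
  refine three_smul_eq_add_of_det2_eq (e₁.trans e₃.symm) (e₂.trans e₃.symm) ?_
  rw [e₃]
  exact mt Int.sign_eq_zero_iff_zero.1 hnc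

theorem stmt5 (T : Set (ℤ × ℤ)) (a b c d : ℤ × ℤ)
    (hnc : det2 (b - a) (c - a) ≠ 0) (hT : T = triPts a b c)
    (hT4 : T = {a, b, c, d}) (hcard : T.ncard = 4)
    (hd : toR d ∈ interior (convexHull ℝ {toR a, toR b, toR c})) :
    (3 : ℤ) • d = a + b + c :=
  stmt5_general T a b c d hnc hT hT4 hd
end

section
/- Let S ⊆ ℤ² be B-stable and suppose S contains the four points (0,0), (1,0), (2,0), (0,1) of a border triangle. Then S = ℤ²: for every t ∈ ℤ and every k ∈ ℤ, the point (t, k) belongs to S. -/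
/-!
For `ε = ±1`, the lattice points of the triangle `a, a + (2, 0), a + (m, ε)` are read off from
the four half-planes `0 ≤ ε (y - a₂) ≤ 1` and the two slanted sides, so every such triangle is a
border triangle with `a + (1, 0)` on its base. Taking the apex at `(0, 1)` moves membership along
the `x`-axis in both directions, and taking it directly above or below the base moves a full row
of `S` to the adjacent rows.
-/

lemma halfPlane_of_mem_convexHull {s : Set (ℝ × ℝ)} {α β γ : ℝ}
    (hs : ∀ w ∈ s, α * w.1 + β * w.2 ≤ γ) {w : ℝ × ℝ} (hw : w ∈ convexHull ℝ s) :
    α * w.1 + β * w.2 ≤ γ :=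
  convexHull_min hs
    (convex_halfSpace_le (α • LinearMap.fst ℝ ℝ ℝ + β • LinearMap.snd ℝ ℝ ℝ).isLinear γ) hw

lemma notMem_interior_of_halfPlane {K : Set (ℝ × ℝ)} {α β γ : ℝ} (hαβ : α ≠ 0 ∨ β ≠ 0)
    (hK : ∀ w ∈ K, α * w.1 + β * w.2 ≤ γ) {p : ℝ × ℝ} (hp : α * p.1 + β * p.2 = γ) :
    p ∉ interior K := by
  intro hint
  have hline : Filter.Tendsto (fun t : ℝ => p + t • (α, β)) (nhds 0) (nhds p) := by
    have hcont : Continuous fun t : ℝ => p + t • (α, β) := by fun_prop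
    exact hcont.tendsto' 0 p (by simp)
  obtain ⟨t, htK, ht⟩ := (((hline.eventually (mem_interior_iff_mem_nhds.1 hint)).filter_mono
    nhdsWithin_le_nhds).and (self_mem_nhdsWithin (s := Set.Ioi (0 : ℝ)))).exists
  have hpos : 0 < α ^ 2 + β ^ 2 := by rcases hαβ with h | h <;> positivity
  have := hK _ htK
  simp only [Prod.fst_add, Prod.snd_add, Prod.smul_mk, smul_eq_mul] at this
  nlinarith [mul_pos (Set.mem_Ioi.1 ht) hpos]

lemma halfPlane_of_mem_convexHull_toR {a b c : ℤ × ℤ} {α β γ : ℤ}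
    (ha : α * a.1 + β * a.2 ≤ γ) (hb : α * b.1 + β * b.2 ≤ γ) (hc : α * c.1 + β * c.2 ≤ γ)
    {w : ℝ × ℝ} (hw : w ∈ convexHull ℝ {toR a, toR b, toR c}) :
    (α : ℝ) * w.1 + β * w.2 ≤ γ := by
  refine halfPlane_of_mem_convexHull ?_ hw
  rintro _ (rfl | rfl | rfl) <;> simp only [toR] <;> exact_mod_cast ‹_›

lemma halfPlane_of_mem_triPts {a b c p : ℤ × ℤ} {α β γ : ℤ}
    (ha : α * a.1 + β * a.2 ≤ γ) (hb : α * b.1 + β * b.2 ≤ γ) (hc : α * c.1 + β * c.2 ≤ γ)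
    (hp : p ∈ triPts a b c) : α * p.1 + β * p.2 ≤ γ := by
  have := halfPlane_of_mem_convexHull_toR ha hb hc hp
  simp only [toR] at this
  exact_mod_cast this

lemma eq_of_mem_triPts_flat {a p : ℤ × ℤ} {m ε : ℤ} (hε : ε * ε = 1)
    (hp : p ∈ triPts a (a + (2, 0)) (a + (m, ε))) :
    p = a ∨ p = a + (2, 0) ∨ p = a + (m, ε) ∨ p = a + (1, 0) := by
  obtain ⟨a₁, a₂⟩ := a
  obtain ⟨p₁, p₂⟩ := p
  simp only [Prod.mk_add_mk, Prod.mk.injEq] at hp ⊢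
  have hm : m * ε * ε = m := by rw [mul_assoc, hε, mul_one]
  have hlow : 0 ≤ ε * (p₂ - a₂) := by
    have := halfPlane_of_mem_triPts (α := 0) (β := -ε) (γ := -ε * a₂)
      (by simp) (by simp) (by simp; nlinarith) hp
    linarith
  have hhigh : ε * (p₂ - a₂) ≤ 1 := by
    have := halfPlane_of_mem_triPts (α := 0) (β := ε) (γ := ε * a₂ + 1)
      (by simp) (by simp) (by simp; nlinarith) hp
    linarith
  have hleft := halfPlane_of_mem_triPts (α := -1) (β := m * ε) (γ := -a₁ + m * ε * a₂)
    (by simp) (by simp; linarith) (by simp; nlinarith) hp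
  have hright := halfPlane_of_mem_triPts (α := 1) (β := 2 * ε - m * ε)
    (γ := a₁ + 2 + (2 * ε - m * ε) * a₂) (by simp) (by simp) (by simp; nlinarith) hp
  rcases (by omega : ε * (p₂ - a₂) = 0 ∨ ε * (p₂ - a₂) = 1) with hu | hu
  · obtain rfl : p₂ = a₂ := by linear_combination ε * hu - (p₂ - a₂) * hε
    have : a₁ ≤ p₁ := by linarith
    have : p₁ ≤ a₁ + 2 := by linarith
    omega
  · obtain rfl : p₂ = a₂ + ε := by linear_combination ε * hu - (p₂ - a₂) * hε
    have : p₁ = a₁ + m := by linarith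
    tauto

lemma isBorderTri_flat (a : ℤ × ℤ) {m ε : ℤ} (hε : ε * ε = 1) :
    IsBorderTri {a, a + (2, 0), a + (m, ε), a + (1, 0)} := by
  have hε0 : ε ≠ 0 := by rintro rfl; simp at hε
  have hmid : toR (a + (1, 0)) = midpoint ℝ (toR a) (toR (a + (2, 0))) := by
    ext <;> simp [toR, midpoint_eq_smul_add] <;> ring
  refine ⟨a, a + (2, 0), a + (m, ε), a + (1, 0), ?_, ?_, rfl, ?_, ?_⟩
  · simpa [det2] using hε0
  · ext p
    refine ⟨fun hp => ?_, eq_of_mem_triPts_flat hε⟩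
    rcases hp with rfl | rfl | rfl | rfl
    · exact subset_convexHull ℝ _ (by simp)
    · exact subset_convexHull ℝ _ (by simp)
    · exact subset_convexHull ℝ _ (by simp)
    · change toR _ ∈ convexHull ℝ _
      rw [hmid]
      exact segment_subset_convexHull (by simp) (by simp) (midpoint_mem_segment _ _)
  · rw [Set.ncard_insert_of_notMem, Set.ncard_insert_of_notMem, Set.ncard_insert_of_notMem,
      Set.ncard_singleton] <;> simp [Prod.ext_iff] <;> omega
  · refine notMem_interior_of_halfPlane (α := 0) (β := -ε) (γ := -ε * a.2) (by simpa using hε0)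
      (fun w hw => ?_) (by simp [toR])
    exact_mod_cast halfPlane_of_mem_convexHull_toR (α := 0) (β := -ε) (γ := -ε * a.2)
      (by simp) (by simp) (by simp; nlinarith) hw

lemma BStable.mem_of_sdiff_subset {S T : Set (ℤ × ℤ)} (hS : BStable S) (hT : IsBorderTri T)
    {w : ℤ × ℤ} (hw : w ∈ T) (hTS : T \ {w} ⊆ S) : w ∈ S := by
  by_contra hwS
  have hcard : T.ncard = 4 := by
    obtain ⟨-, -, -, -, -, -, -, hcard, -⟩ := hT
    exact hcard
  have hinter : T ∩ S = T \ {w} :=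
    Set.Subset.antisymm (fun x hx => ⟨hx.1, fun hxw => hwS (hxw ▸ hx.2)⟩)
      (Set.subset_inter Set.sdiff_subset hTS)
  refine hS T hT ?_
  rw [hinter, Set.ncard_sdiff_singleton_of_mem hw, hcard]

section Flat

variable {S : Set (ℤ × ℤ)} (a : ℤ × ℤ) {m ε : ℤ}

lemma BStable.apex_mem (hS : BStable S) (hε : ε * ε = 1) (h₀ : a ∈ S) (h₁ : a + (1, 0) ∈ S)
    (h₂ : a + (2, 0) ∈ S) : a + (m, ε) ∈ S :=
  hS.mem_of_sdiff_subset (isBorderTri_flat a (m := m) hε) (by simp)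
    (Set.sdiff_singleton_subset_iff.2 (by simp [Set.insert_subset_iff, h₀, h₁, h₂]))

lemma BStable.right_mem (hS : BStable S) (hε : ε * ε = 1) (h₀ : a ∈ S) (h₁ : a + (1, 0) ∈ S)
    (hapex : a + (m, ε) ∈ S) : a + (2, 0) ∈ S :=
  hS.mem_of_sdiff_subset (isBorderTri_flat a (m := m) hε) (by simp)
    (Set.sdiff_singleton_subset_iff.2 (by simp [Set.insert_subset_iff, h₀, h₁, hapex]))

lemma BStable.left_mem (hS : BStable S) (hε : ε * ε = 1) (h₁ : a + (1, 0) ∈ S)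
    (h₂ : a + (2, 0) ∈ S) (hapex : a + (m, ε) ∈ S) : a ∈ S :=
  hS.mem_of_sdiff_subset (isBorderTri_flat a (m := m) hε) (by simp)
    (Set.sdiff_singleton_subset_iff.2 (by simp [Set.insert_subset_iff, h₁, h₂, hapex]))

end Flat

lemma BStable.mem_row_zero {S : Set (ℤ × ℤ)} (hS : BStable S) (h₀ : ((0 : ℤ), (0 : ℤ)) ∈ S)
    (h₁ : ((1 : ℤ), (0 : ℤ)) ∈ S) (hapex : ((0 : ℤ), (1 : ℤ)) ∈ S) (t : ℤ) : (t, 0) ∈ S := by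
  suffices ∀ t : ℤ, (t, 0) ∈ S ∧ (t + 1, 0) ∈ S from (this t).1
  intro t
  induction t using Int.induction_on with
  | zero => exact ⟨h₀, by simpa using h₁⟩
  | succ i ih =>
    refine ⟨ih.2, ?_⟩
    have := hS.right_mem (i, 0) (m := -i) (ε := 1) (by norm_num) ih.1 (by simpa using ih.2)
      (by simpa using hapex)
    simpa [add_assoc, one_add_one_eq_two] using this
  | pred i ih =>
    refine ⟨?_, by simpa using ih.1⟩
    have := hS.left_mem (-i - 1, 0) (m := i + 1) (ε := 1) (by norm_num) (by simpa using ih.1)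
      (by rw [Prod.mk_add_mk]; convert ih.2 using 2 <;> ring) (by simpa using hapex)
    simpa using this

lemma BStable.mem_row_add {S : Set (ℤ × ℤ)} (hS : BStable S) {k ε : ℤ} (hε : ε * ε = 1)
    (hk : ∀ t : ℤ, (t, k) ∈ S) (t : ℤ) : (t, k + ε) ∈ S := by
  simpa using hS.apex_mem (t, k) (m := 0) hε (hk t) (by simpa using hk (t + 1))
    (by simpa using hk (t + 2))

theorem stmt8_general (S : Set (ℤ × ℤ)) (hS : BStable S)
    (h0 : ((0 : ℤ), (0 : ℤ)) ∈ S) (h1 : ((1 : ℤ), (0 : ℤ)) ∈ S)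
    (h3 : ((0 : ℤ), (1 : ℤ)) ∈ S) :
    ∀ t k : ℤ, (t, k) ∈ S := by
  intro t k
  induction k using Int.induction_on generalizing t with
  | zero => exact hS.mem_row_zero h0 h1 h3 t
  | succ i ih => exact hS.mem_row_add (by norm_num) ih t
  | pred i ih => simpa [sub_eq_add_neg] using hS.mem_row_add (ε := -1) (by norm_num) ih t

theorem stmt8 (S : Set (ℤ × ℤ)) (hS : BStable S)
    (h0 : ((0 : ℤ), (0 : ℤ)) ∈ S) (h1 : ((1 : ℤ), (0 : ℤ)) ∈ S)
    (h2 : ((2 : ℤ), (0 : ℤ)) ∈ S) (h3 : ((0 : ℤ), (1 : ℤ)) ∈ S) :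
    ∀ t k : ℤ, (t, k) ∈ S :=
  stmt8_general S hS h0 h1 h3
end

section
/- If S ⊊ ℤ² is B-stable, then any translate of the 3×2 rectangle of lattice points (3 wide, 2 tall) contains at most 2 points of S. -/
/-!
If `det2 v w = ±1`, the lattice points of the triangle with vertices `a`, `a + 2v`, `a + w` are
these three and the edge midpoint `a + v`, so they form a border triangle: a B-stable set
containing three of the four points contains all of them. Hence three points `a, a + v, a + 2v`
of `S` fill both neighbouring lines parallel to `v`, and by induction all of `ℤ²`. Three points
of a 3 × 2 rectangle always lie in such a triangle with `v = (1, 0)`: either they form a row, or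
two of them lie in one row at distance 1 or 2 and the third lies in the other row.
-/

open Set

@[simp] lemma det2_add_right (u v w : ℤ × ℤ) : det2 u (v + w) = det2 u v + det2 u w := by
  simp only [det2, Prod.fst_add, Prod.snd_add]; ring

@[simp] lemma det2_sub_right (u v w : ℤ × ℤ) : det2 u (v - w) = det2 u v - det2 u w := by
  simp only [det2, Prod.fst_sub, Prod.snd_sub]; ring

@[simp] lemma det2_smul_right (u v : ℤ × ℤ) (c : ℤ) : det2 u (c • v) = c * det2 u v := by
  simp only [det2, Prod.smul_fst, Prod.smul_snd, smul_eq_mul]; ring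

@[simp] lemma det2_self (u : ℤ × ℤ) : det2 u u = 0 := by
  simp only [det2]; ring

lemma det2_smul_eq_add (u v w : ℤ × ℤ) : det2 v w • u = det2 u w • v + det2 v u • w := by
  ext <;> simp only [det2, Prod.smul_fst, Prod.smul_snd, Prod.fst_add, Prod.snd_add,
    smul_eq_mul] <;> ring

@[simp] lemma det2_add_left (u v w : ℤ × ℤ) : det2 (u + v) w = det2 u w + det2 v w := by
  simp only [det2, Prod.fst_add, Prod.snd_add]; ring

@[simp] lemma det2_sub_left (u v w : ℤ × ℤ) : det2 (u - v) w = det2 u w - det2 v w := by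
  simp only [det2, Prod.fst_sub, Prod.snd_sub]; ring

@[simp] lemma det2_smul_left (u v : ℤ × ℤ) (c : ℤ) : det2 (c • u) v = c * det2 u v := by
  simp only [det2, Prod.smul_fst, Prod.smul_snd, smul_eq_mul]; ring

@[simp] lemma det2_neg_left (u v : ℤ × ℤ) : det2 (-u) v = -det2 u v := by
  simp only [det2, Prod.fst_neg, Prod.snd_neg]; ring

lemma det2_comm (u v : ℤ × ℤ) : det2 u v = -det2 v u := by
  simp only [det2]; ring

noncomputable def det2CLM (u : ℤ × ℤ) : StrongDual ℝ (ℝ × ℝ) :=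
  (u.1 : ℝ) • ContinuousLinearMap.snd ℝ ℝ ℝ - (u.2 : ℝ) • ContinuousLinearMap.fst ℝ ℝ ℝ

@[simp] lemma det2CLM_toR (u p : ℤ × ℤ) : det2CLM u (toR p) = det2 u p := by
  simp [det2CLM, toR, det2]

lemma det2CLM_ne_zero {u : ℤ × ℤ} (hu : u ≠ 0) : det2CLM u ≠ 0 := by
  intro h
  have h1 := congrArg (fun f => f (toR (1, 0))) h
  have h2 := congrArg (fun f => f (toR (0, 1))) h
  simp only [det2CLM_toR, zero_apply, det2] at h1 h2
  exact hu (Prod.ext (by simpa using h2) (by simpa using h1))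

lemma convexHull_subset_det2CLM_preimage {a b c u : ℤ × ℤ} {r : ℤ} (ha : r ≤ det2 u a)
    (hb : r ≤ det2 u b) (hc : r ≤ det2 u c) :
    convexHull ℝ {toR a, toR b, toR c} ⊆ det2CLM u ⁻¹' Ici (r : ℝ) := by
  refine convexHull_min ?_ ((convex_Ici _).linear_preimage (det2CLM u).toLinearMap)
  simp only [insert_subset_iff, singleton_subset_iff, mem_preimage, mem_Ici, det2CLM_toR]
  exact ⟨mod_cast ha, mod_cast hb, mod_cast hc⟩

lemma le_det2_of_mem_triPts {a b c p u : ℤ × ℤ} {r : ℤ} (hp : p ∈ triPts a b c)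
    (ha : r ≤ det2 u a) (hb : r ≤ det2 u b) (hc : r ≤ det2 u c) : r ≤ det2 u p := by
  have := convexHull_subset_det2CLM_preimage ha hb hc hp
  simp only [mem_preimage, mem_Ici, det2CLM_toR] at this
  exact_mod_cast this

lemma toR_notMem_interior_convexHull {a b c p u : ℤ × ℤ} {r : ℤ} (hu : u ≠ 0)
    (ha : r ≤ det2 u a) (hb : r ≤ det2 u b) (hc : r ≤ det2 u c) (hp : det2 u p = r) :
    toR p ∉ interior (convexHull ℝ {toR a, toR b, toR c}) := by
  intro hint
  have hopen := ((det2CLM u).isOpenMap_of_ne_zero (det2CLM_ne_zero hu)).image_interior_subset _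
    (mem_image_of_mem _ hint)
  have hlt := interior_mono (image_subset_iff.mpr (convexHull_subset_det2CLM_preimage ha hb hc))
    hopen
  rw [interior_Ici, mem_Ioi, det2CLM_toR, hp] at hlt
  exact lt_irrefl _ hlt

section BorderTri

def borderTri (a v w : ℤ × ℤ) : Set (ℤ × ℤ) := {a, a + v + v, a + w, a + v}

variable {a v w : ℤ × ℤ}

lemma borderTri_subset_triPts : borderTri a v w ⊆ triPts a (a + v + v) (a + w) := by
  have hmid : toR (a + v) = midpoint ℝ (toR a) (toR (a + v + v)) := by
    ext <;> simp [toR, midpoint_eq_smul_add] <;> ring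
  rintro p (rfl | rfl | rfl | rfl)
  · exact subset_convexHull ℝ _ (by simp)
  · exact subset_convexHull ℝ _ (by simp)
  · exact subset_convexHull ℝ _ (by simp)
  · rw [triPts, mem_ofPred_eq, hmid]
    exact segment_subset_convexHull (by simp) (by simp) (midpoint_mem_segment _ _)

lemma triPts_subset_borderTri (hvw : det2 v w = 1) :
    triPts a (a + v + v) (a + w) ⊆ borderTri a v w := by
  intro p hp
  have hwv : det2 w v = -1 := by rw [det2_comm, hvw]
  -- The sides of the triangle bound the coordinates of `p - a` in the basis `v, w`.
  have hk : 0 ≤ det2 v (p - a) := by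
    have := le_det2_of_mem_triPts (u := v) (r := det2 v a) hp le_rfl (by simp) (by simp [hvw])
    simpa using this
  have hm : 0 ≤ det2 (p - a) w := by
    have := le_det2_of_mem_triPts (u := -w) (r := det2 (-w) a) hp le_rfl
      (by simp only [det2_neg_left, det2_add_right, hwv]; omega) (by simp)
    rw [det2_neg_left, det2_neg_left] at this
    linarith [det2_sub_left p a w, det2_comm p w, det2_comm a w]
  have hmk : det2 (p - a) w + 2 * det2 v (p - a) ≤ 2 := by
    have := le_det2_of_mem_triPts (u := w - v - v) (r := det2 (w - v - v) a - 2) hp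
      (by omega) (by simp only [det2_sub_left, det2_add_right, det2_self, hwv]; omega)
      (by simp [hvw])
    simp only [det2_sub_left, det2_sub_right] at this ⊢
    linarith [det2_comm p v, det2_comm a v, det2_comm p w, det2_comm a w]
  have hp' : p = a + det2 (p - a) w • v + det2 v (p - a) • w := by
    rw [add_assoc, ← det2_smul_eq_add, hvw, one_smul, add_sub_cancel]
  have hcases : (det2 (p - a) w = 0 ∧ det2 v (p - a) = 0) ∨
      (det2 (p - a) w = 2 ∧ det2 v (p - a) = 0) ∨ (det2 (p - a) w = 0 ∧ det2 v (p - a) = 1) ∨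
      (det2 (p - a) w = 1 ∧ det2 v (p - a) = 0) := by
    omega
  rw [hp']
  rcases hcases with ⟨h1, h2⟩ | ⟨h1, h2⟩ | ⟨h1, h2⟩ | ⟨h1, h2⟩ <;> rw [h1, h2] <;>
    simp [borderTri, two_smul, add_assoc]

lemma triPts_eq_borderTri (hvw : det2 v w = 1) : triPts a (a + v + v) (a + w) = borderTri a v w :=
  (triPts_subset_borderTri hvw).antisymm borderTri_subset_triPts

lemma borderTri_eq_image : borderTri a v w =
    (fun q : ℤ × ℤ => a + q.1 • v + q.2 • w) '' {(0, 0), (2, 0), (0, 1), (1, 0)} := by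
  simp only [borderTri, image_insert_eq, image_singleton, zero_smul, one_smul, two_smul, add_zero,
    zero_add, add_assoc]

lemma ncard_borderTri (hvw : det2 v w = 1) : (borderTri a v w).ncard = 4 := by
  have hinj : Function.Injective (fun q : ℤ × ℤ => a + q.1 • v + q.2 • w) := by
    intro q q' h
    have h1 := congrArg (fun p => det2 (p - a) w) h
    have h2 := congrArg (fun p => det2 v (p - a)) h
    simp only [add_assoc, add_sub_cancel_left, det2_add_left, det2_add_right, det2_smul_left,
      det2_smul_right, det2_self, hvw, mul_one, mul_zero, add_zero, zero_add] at h1 h2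
    exact Prod.ext h1 h2
  rw [borderTri_eq_image, ncard_image_of_injective _ hinj]
  simp [ncard_insert_of_notMem]

lemma isBorderTri_borderTri_of_det2_eq_one (hvw : det2 v w = 1) :
    IsBorderTri (borderTri a v w) := by
  have hv : v ≠ 0 := by rintro rfl; simp [det2] at hvw
  refine ⟨a, a + v + v, a + w, a + v, ?_, (triPts_eq_borderTri hvw).symm, rfl,
    ncard_borderTri hvw, ?_⟩
  · rw [add_assoc, add_sub_cancel_left, add_sub_cancel_left, det2_add_left, hvw]
    norm_num
  · exact toR_notMem_interior_convexHull hv le_rfl (by simp) (by simp [hvw]) (by simp)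

lemma borderTri_eq_borderTri_neg : borderTri a v w = borderTri (a + v + v) (-v) (w - v - v) := by
  simp only [borderTri, add_neg_cancel_right]
  rw [insert_comm]
  abel_nf

lemma isBorderTri_borderTri (hvw : IsUnit (det2 v w)) : IsBorderTri (borderTri a v w) := by
  rcases Int.isUnit_iff.mp hvw with h | h
  · exact isBorderTri_borderTri_of_det2_eq_one h
  · rw [borderTri_eq_borderTri_neg]
    exact isBorderTri_borderTri_of_det2_eq_one (by simp [h])

end BorderTri

lemma IsBorderTri.ncard_eq {T : Set (ℤ × ℤ)} (hT : IsBorderTri T) : T.ncard = 4 := by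
  obtain ⟨_, _, _, _, _, _, _, h4, _⟩ := hT
  exact h4

lemma IsBorderTri.finite {T : Set (ℤ × ℤ)} (hT : IsBorderTri T) : T.Finite :=
  finite_of_ncard_ne_zero (by rw [hT.ncard_eq]; norm_num)

namespace BStable

variable {S : Set (ℤ × ℤ)}

lemma subset_of_three_le_ncard (hB : BStable S) {T : Set (ℤ × ℤ)} (hT : IsBorderTri T)
    (h3 : 3 ≤ (T ∩ S).ncard) : T ⊆ S := by
  have hle : (T ∩ S).ncard ≤ 4 := hT.ncard_eq ▸ ncard_le_ncard inter_subset_left hT.finite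
  have h4 : T.ncard ≤ (T ∩ S).ncard := by have := hB T hT; rw [hT.ncard_eq]; omega
  exact inter_eq_left.mp (eq_of_subset_of_ncard_le inter_subset_left h4 hT.finite)

lemma mem_of_collinear (hB : BStable S) {a v p : ℤ × ℤ} (hvp : IsUnit (det2 v (p - a)))
    (h0 : a ∈ S) (h1 : a + v ∈ S) (h2 : a + v + v ∈ S) : p ∈ S := by
  set T := borderTri a v (p - a)
  have hT : IsBorderTri T := isBorderTri_borderTri hvp
  have hp : p ∈ T := by simp [T, borderTri]
  have hsub : T \ {p} ⊆ T ∩ S := by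
    rintro x ⟨hxT, hxp⟩
    refine ⟨hxT, ?_⟩
    rcases hxT with rfl | rfl | rfl | rfl
    · exact h0
    · exact h2
    · exact absurd (add_sub_cancel a p) hxp
    · exact h1
  refine hB.subset_of_three_le_ncard hT ?_ hp
  calc 3 = (T \ {p}).ncard := by rw [ncard_sdiff_singleton_of_mem hp, hT.ncard_eq]
    _ ≤ (T ∩ S).ncard := ncard_le_ncard hsub (hT.finite.subset inter_subset_left)

/-- The lines parallel to `v` are the level sets of `det2 v (· - a)`; each full line forces the two
neighbouring ones. -/
lemma eq_univ_of_collinear (hB : BStable S) {a v w : ℤ × ℤ} (hvw : det2 v w = 1)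
    (h0 : a ∈ S) (h1 : a + v ∈ S) (h2 : a + v + v ∈ S) : S = univ := by
  let Line (c : ℤ) : Prop := ∀ p, det2 v (p - a) = c → p ∈ S
  have neighbours : ∀ c, Line c → Line (c + 1) ∧ Line (c - 1) := by
    intro c hc
    have hq : ∀ n : ℤ, a + c • w + n • v ∈ S := fun n => hc _ (by
      simp only [add_assoc, add_sub_cancel_left, det2_add_right, det2_smul_right, det2_self, hvw]
      ring)
    have key : ∀ p, IsUnit (det2 v (p - (a + c • w))) → p ∈ S := fun p hp =>
      hB.mem_of_collinear hp (by simpa using hq 0) (by simpa using hq 1)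
        (by simpa [add_assoc, two_smul] using hq 2)
    constructor <;> intro p hp <;> refine key p (Int.isUnit_iff.mpr ?_) <;>
      simp only [det2_sub_right, det2_add_right, det2_smul_right, hvw] at hp ⊢ <;> omega
  have line_one : Line 1 := fun p hp => hB.mem_of_collinear (by simp [hp]) h0 h1 h2
  have line_zero : Line 0 := by simpa using (neighbours 1 line_one).2
  have all_lines : ∀ c, Line c := by
    intro c
    induction c using Int.induction_on with
    | zero => exact line_zero
    | succ i ih => exact (neighbours _ ih).1
    | pred i ih => exact (neighbours _ ih).2
  exact eq_univ_of_forall fun p => all_lines _ p rfl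

lemma eq_univ_of_three_mem_borderTri (hB : BStable S) {a v w x y z : ℤ × ℤ}
    (hvw : IsUnit (det2 v w)) (hx : x ∈ borderTri a v w ∩ S) (hy : y ∈ borderTri a v w ∩ S)
    (hz : z ∈ borderTri a v w ∩ S) (hxy : x ≠ y) (hxz : x ≠ z) (hyz : y ≠ z) : S = univ := by
  have hT := isBorderTri_borderTri (a := a) hvw
  have hsub : borderTri a v w ⊆ S := by
    refine hB.subset_of_three_le_ncard hT ?_
    calc 3 = ({x, y, z} : Set (ℤ × ℤ)).ncard :=
          (ncard_eq_three.mpr ⟨x, y, z, hxy, hxz, hyz, rfl⟩).symm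
      _ ≤ _ := ncard_le_ncard (insert_subset hx (insert_subset hy (singleton_subset_iff.mpr hz)))
          (hT.finite.subset inter_subset_left)
  exact hB.eq_univ_of_collinear (a := a) (v := v) (w := det2 v w • w)
    (by rw [det2_smul_right, Int.isUnit_mul_self hvw])
    (hsub (by simp [borderTri])) (hsub (by simp [borderTri])) (hsub (by simp [borderTri]))

lemma eq_univ_of_three_mem_rect (hB : BStable S) {a b : ℤ} {x y z : ℤ × ℤ}
    (hx : x ∈ S ∩ Icc (a + 1, b + 1) (a + 3, b + 2))
    (hy : y ∈ S ∩ Icc (a + 1, b + 1) (a + 3, b + 2))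
    (hz : z ∈ S ∩ Icc (a + 1, b + 1) (a + 3, b + 2)) (hxy : x ≠ y) (hxz : x ≠ z) (hyz : y ≠ z) :
    S = univ := by
  simp only [mem_inter_iff, mem_Icc, Prod.le_def] at hx hy hz
  wlog hrow : x.2 = y.2 generalizing x y z
  · rcases (show x.2 = z.2 ∨ y.2 = z.2 by omega) with h | h
    · exact this hxz hxy hyz.symm hx hz hy h
    · exact this hyz hxy.symm hxz.symm hy hz hx h
  wlog hlt : x.1 < y.1 generalizing x y
  · exact this hxy.symm hyz hxz hy hx hrow.symm
      (lt_of_le_of_ne (not_lt.mp hlt) fun h => hxy (Prod.ext h.symm hrow))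
  obtain ⟨hxS, ⟨hx1, hx2⟩, hx3, hx4⟩ := hx
  obtain ⟨hyS, ⟨hy1, hy2⟩, hy3, hy4⟩ := hy
  obtain ⟨hzS, ⟨hz1, hz2⟩, hz3, hz4⟩ := hz
  by_cases hzrow : z.2 = x.2
  · refine hB.eq_univ_of_three_mem_borderTri (a := (a + 1, x.2)) (v := (1, 0)) (w := (0, 1))
      (by simp [det2]) ⟨?_, hxS⟩ ⟨?_, hyS⟩ ⟨?_, hzS⟩ hxy hxz hyz <;>
    simp only [borderTri, mem_insert_iff, mem_singleton_iff, Prod.ext_iff, Prod.fst_add,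
      Prod.snd_add, add_zero, and_true] <;> omega
  · have hunit : IsUnit (det2 (1, 0) (z - x)) :=
      Int.isUnit_iff.mpr (by simp only [det2, Prod.fst_sub, Prod.snd_sub]; omega)
    refine hB.eq_univ_of_three_mem_borderTri (a := x) hunit ⟨?_, hxS⟩ ⟨?_, hyS⟩ ⟨?_, hzS⟩
      hxy hxz hyz <;>
    simp only [borderTri, mem_insert_iff, mem_singleton_iff, Prod.ext_iff, Prod.fst_add,
      Prod.snd_add, Prod.fst_sub, Prod.snd_sub, true_or] <;> omega

end BStable

theorem stmt10 (S : Set (ℤ × ℤ)) (hS : S ≠ Set.univ) (hB : BStable S) :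
    ∀ a b : ℤ, (S ∩ Set.Icc (a + 1, b + 1) (a + 3, b + 2)).ncard ≤ 2 := by
  intro a b
  by_contra! h
  obtain ⟨t, hts, ht⟩ := exists_subset_card_eq (show 3 ≤ _ from h)
  obtain ⟨x, y, z, hxy, hxz, hyz, rfl⟩ := ncard_eq_three.mp ht
  exact hS (hB.eq_univ_of_three_mem_rect (hts (by simp)) (hts (by simp)) (hts (by simp))
    hxy hxz hyz)
end

section
/- Let S ⊊ ℤ² be B-stable and suppose (x,y) and (x+1,y) both lie in S. Then no other point (x',y') with |x−x'| ≤ 2, |y−y'| ≤ 2, other than possibly (x−2,y), lies in S. Consequently, Γ(S) contains at most one point in any translate of the 3×3 grid, where Γ(S) = {(x,y) ∈ S : (x+1,y) ∈ S}. -/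
/-- `Γ(S)`: points of `S` whose right neighbour is also in `S`. -/
def Gamma (S : Set (ℤ × ℤ)) : Set (ℤ × ℤ) := {p | p ∈ S ∧ (p.1 + 1, p.2) ∈ S}

lemma toR_inj : Function.Injective toR := by
  intro a b h
  simp only [toR, Prod.mk.injEq] at h
  exact Prod.ext (by exact_mod_cast h.1) (by exact_mod_cast h.2)

noncomputable def gR (v : ℤ × ℤ) (z : ℝ × ℝ) : ℝ := (v.1 : ℝ) * z.2 - (v.2 : ℝ) * z.1

lemma gR_linear (v : ℤ × ℤ) : IsLinearMap ℝ (gR v) := by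
  constructor
  · intro a b; simp only [gR, Prod.fst_add, Prod.snd_add]; ring
  · intro c a; simp only [gR, Prod.smul_fst, Prod.smul_snd, smul_eq_mul]; ring

lemma gR_toR (v w : ℤ × ℤ) : gR v (toR w) = (det2 v w : ℝ) := by
  simp only [gR, toR, det2]; push_cast; ring

lemma hull_triple_mem {A B C z : ℝ × ℝ}
    (hz : z ∈ convexHull ℝ ({A, B, C} : Set (ℝ × ℝ))) :
    ∃ t s : ℝ, 0 ≤ t ∧ t ≤ 1 ∧ 0 ≤ s ∧ s ≤ 1 ∧
      z = (1 - t) • A + t • ((1 - s) • B + s • C) := by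
  rw [convexHull_insert ⟨B, by simp⟩, mem_convexJoin] at hz
  obtain ⟨x, hx, u, hu, hseg⟩ := hz
  rw [Set.mem_singleton_iff] at hx
  subst hx
  rw [convexHull_pair, segment_eq_image] at hu
  obtain ⟨s, hs, rfl⟩ := hu
  rw [segment_eq_image] at hseg
  obtain ⟨t, ht, rfl⟩ := hseg
  exact ⟨t, s, ht.1, ht.2, hs.1, hs.2, rfl⟩

lemma triPts_eq (p v q : ℤ × ℤ)
    (hd : det2 v (q - p) = 1 ∨ det2 v (q - p) = -1) :
    triPts p (p + v + v) q = {p, p + v, p + v + v, q} := by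
  have hv : v ≠ 0 := by
    rintro rfl
    rcases hd with h | h <;> simp [det2] at h
  -- Bezout coefficients for v
  obtain ⟨A1, B1, hAB⟩ : ∃ A1 B1 : ℤ, A1 * v.1 + B1 * v.2 = 1 := by
    rcases hd with h | h
    · exact ⟨(q - p).2, -(q - p).1, by simp only [det2] at h; linarith⟩
    · exact ⟨-(q - p).2, (q - p).1, by simp only [det2] at h; linarith⟩
  ext z
  simp only [triPts, Set.mem_setOf_eq, Set.mem_insert_iff, Set.mem_singleton_iff]
  constructor
  · intro hz
    obtain ⟨t, s, ht0, ht1, hs0, hs1, hzeq⟩ := hull_triple_mem hz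
    -- compute gR v of both sides relative to p
    have key : gR v (toR z) - gR v (toR p) = t * s * (det2 v (q - p) : ℝ) := by
      rw [hzeq]
      have hB : gR v (toR (p + v + v)) = gR v (toR p) := by
        rw [gR_toR, gR_toR]
        have : det2 v (p + v + v) = det2 v p := by simp only [det2]; push_cast [Prod.fst_add, Prod.snd_add]; ring
        rw [this]
      have hC : gR v (toR q) - gR v (toR p) = (det2 v (q - p) : ℝ) := by
        rw [gR_toR, gR_toR]
        have : det2 v q - det2 v p = det2 v (q - p) := by
          simp only [det2, Prod.fst_sub, Prod.snd_sub]; ring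
        push_cast [← this]; ring
      have l := gR_linear v
      rw [l.map_add, l.map_smul, l.map_smul, l.map_add, l.map_smul, l.map_smul,
        smul_eq_mul, smul_eq_mul, smul_eq_mul, smul_eq_mul]
      rw [hB] at *
      linear_combination t * s * hC
    have hint : gR v (toR z) - gR v (toR p) = (det2 v (z - p) : ℝ) := by
      rw [gR_toR, gR_toR]
      have : det2 v z - det2 v p = det2 v (z - p) := by
        simp only [det2, Prod.fst_sub, Prod.snd_sub]; ring
      push_cast [← this]; ring
    set m : ℤ := det2 v (z - p) with hm
    set d : ℤ := det2 v (q - p) with hdd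
    have hts : (m : ℝ) = t * s * d := by rw [← hint, key]
    have hd2 : (d : ℤ) = 1 ∨ (d : ℤ) = -1 := hd
    -- m * d = t*s ∈ [0,1]
    have hmd : ((m : ℝ)) * (d : ℝ) = t * s := by
      rcases hd2 with h | h <;> rw [h] at hts ⊢ <;> push_cast at hts ⊢ <;> linarith
    have hcast : ((m * d : ℤ) : ℝ) = t * s := by push_cast; exact hmd
    have hts0 : (0:ℝ) ≤ t * s := mul_nonneg ht0 hs0
    have hts1 : t * s ≤ 1 := by nlinarith
    have : m * d = 0 ∨ m * d = 1 := by
      have h0 : (0:ℤ) ≤ m * d := by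
        have := hts0; rw [← hcast] at this; exact_mod_cast this
      have h1 : (m * d : ℤ) ≤ 1 := by
        have := hts1; rw [← hcast] at this; exact_mod_cast this
      omega
    rcases this with hcase | hcase
    · -- t*s = 0, z on segment p to p+2v
      have hts00 : t * s = 0 := by
        rw [← hcast, hcase]; norm_num
      have hm0 : m = 0 := by rcases hd2 with h | h <;> rw [h] at hcase <;> omega
      -- z - p = c • v
      have hdet0 : v.1 * (z - p).2 - v.2 * (z - p).1 = 0 := by
        have := hm0; simp only [hm, det2] at this; linarith
      set c : ℤ := A1 * (z - p).1 + B1 * (z - p).2 with hc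
      have hc1 : (z - p).1 = c * v.1 := by
        have h1 : (z-p).1 = (A1 * v.1 + B1 * v.2) * (z-p).1 := by rw [hAB]; ring
        calc (z-p).1 = A1 * v.1 * (z-p).1 + B1 * (v.2 * (z-p).1) := by linarith [h1]
        _ = A1 * v.1 * (z-p).1 + B1 * (v.1 * (z-p).2) := by rw [show v.2 * (z-p).1 = v.1 * (z-p).2 by linarith]
        _ = c * v.1 := by rw [hc]; ring
      have hc2 : (z - p).2 = c * v.2 := by
        have h1 : (z-p).2 = (A1 * v.1 + B1 * v.2) * (z-p).2 := by rw [hAB]; ring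
        calc (z-p).2 = A1 * (v.1 * (z-p).2) + B1 * v.2 * (z-p).2 := by linarith [h1]
        _ = A1 * (v.2 * (z-p).1) + B1 * v.2 * (z-p).2 := by rw [show v.1 * (z-p).2 = v.2 * (z-p).1 by linarith]
        _ = c * v.2 := by rw [hc]; ring
      -- real equation: z - p = (2 t or 0) * v componentwise
      rcases mul_eq_zero.1 hts00 with rfl0 | rfl0
      · -- t = 0 : z = p
        left
        apply toR_inj
        rw [hzeq, rfl0]; simp
      · -- s = 0 : z = p + t • 2v
        have hcomp1 : ((z - p).1 : ℝ) = t * (2 * v.1) := by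
          have : toR z = (1 - t) • toR p + t • toR (p + v + v) := by
            rw [hzeq, rfl0]; simp
          have h1 := congrArg Prod.fst this
          simp only [toR, Prod.fst_add, Prod.smul_fst, smul_eq_mul] at h1
          push_cast [Prod.fst_sub, Prod.fst_add]
          push_cast [Prod.fst_add] at h1
          linarith
        have hcomp2 : ((z - p).2 : ℝ) = t * (2 * v.2) := by
          have : toR z = (1 - t) • toR p + t • toR (p + v + v) := by
            rw [hzeq, rfl0]; simp
          have h2 := congrArg Prod.snd this
          simp only [toR, Prod.snd_add, Prod.smul_snd, smul_eq_mul] at h2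
          push_cast [Prod.snd_sub, Prod.snd_add]
          push_cast [Prod.snd_add] at h2
          linarith
        -- c = 2t, so 0 ≤ c ≤ 2
        have hvne : (v.1 : ℝ) ≠ 0 ∨ (v.2 : ℝ) ≠ 0 := by
          by_contra hcon
          push_neg at hcon
          exact hv (Prod.ext (by exact_mod_cast hcon.1) (by exact_mod_cast hcon.2))
        have hc2t : (c : ℝ) = 2 * t := by
          rcases hvne with hne | hne
          · have h := hcomp1; rw [hc1] at h; push_cast at h
            exact mul_right_cancel₀ hne (by linarith)
          · have h := hcomp2; rw [hc2] at h; push_cast at h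
            exact mul_right_cancel₀ hne (by linarith)
        have hc0 : (0:ℝ) ≤ (c:ℝ) := by rw [hc2t]; nlinarith
        have hcu : (c:ℝ) ≤ 2 := by rw [hc2t]; nlinarith
        have hl : (0:ℤ) ≤ c := by exact_mod_cast hc0
        have hr : c ≤ 2 := by exact_mod_cast hcu
        have hzp : z = p + c • v := by
          have e1 : z.1 = p.1 + c * v.1 := by
            have := hc1; simp only [Prod.fst_sub] at this; linarith
          have e2 : z.2 = p.2 + c * v.2 := by
            have := hc2; simp only [Prod.snd_sub] at this; linarith
          apply Prod.ext
          · simpa [Prod.fst_add, Prod.smul_fst, smul_eq_mul] using e1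
          · simpa [Prod.snd_add, Prod.smul_snd, smul_eq_mul] using e2
        have hcc : c = 0 ∨ c = 1 ∨ c = 2 := by omega
        rcases hcc with h | h | h <;> rw [h] at hzp
        · left; rw [hzp]; simp
        · right; left; rw [hzp]; simp
        · right; right; left; rw [hzp, two_zsmul, ← add_assoc]
    · -- t*s = 1 : z = q
      have hts11 : t * s = 1 := by rw [← hcast, hcase]; norm_num
      have ht : t = 1 := le_antisymm ht1 (by nlinarith)
      have hs : s = 1 := le_antisymm hs1 (by nlinarith)
      right; right; right
      apply toR_inj
      rw [hzeq, ht, hs]; simp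
  · -- easy direction
    intro hz
    have hA : toR p ∈ convexHull ℝ ({toR p, toR (p+v+v), toR q} : Set (ℝ×ℝ)) :=
      subset_convexHull ℝ _ (by simp)
    have hBm : toR (p+v+v) ∈ convexHull ℝ ({toR p, toR (p+v+v), toR q} : Set (ℝ×ℝ)) :=
      subset_convexHull ℝ _ (by simp)
    have hC : toR q ∈ convexHull ℝ ({toR p, toR (p+v+v), toR q} : Set (ℝ×ℝ)) :=
      subset_convexHull ℝ _ (by simp)
    rcases hz with rfl | rfl | rfl | rfl
    · exact hA
    · -- midpoint
      have : toR (p + v) = (1/2 : ℝ) • toR p + (1/2 : ℝ) • toR (p + v + v) := by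
        apply Prod.ext <;>
          simp only [toR, Prod.fst_add, Prod.snd_add, Prod.smul_fst, Prod.smul_snd,
            Prod.fst_add, smul_eq_mul] <;> push_cast <;> ring
      rw [this]
      exact (convex_convexHull ℝ _) hA hBm (by norm_num) (by norm_num) (by norm_num)
    · exact hBm
    · exact hC



lemma isBorderTri_main (p v q : ℤ × ℤ)
    (hd : det2 v (q - p) = 1 ∨ det2 v (q - p) = -1) :
    IsBorderTri {p, p + v, p + v + v, q} := by
  have hv : v ≠ 0 := by
    rintro rfl
    rcases hd with h | h <;> simp [det2] at h
  have hd0 : det2 v (q - p) ≠ 0 := by rcases hd with h | h <;> omega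
  have hqp : q ≠ p := by
    rintro rfl; apply hd0; simp [det2]
  have hq1 : q ≠ p + v := by
    intro h; apply hd0; rw [h, add_sub_cancel_left]; simp [det2]; ring
  have hq2 : q ≠ p + v + v := by
    intro h; apply hd0
    have h2 : p + v + v - p = v + v := by abel
    rw [h, h2]; simp [det2, Prod.fst_add, Prod.snd_add]; ring
  have hv1 : v.1 ≠ 0 ∨ v.2 ≠ 0 := by
    by_contra hcon
    push_neg at hcon
    exact hv (Prod.ext (by simp [hcon.1]) (by simp [hcon.2]))
  have h01 : p ≠ p + v := by
    simp only [ne_eq, Prod.ext_iff, Prod.fst_add, Prod.snd_add]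
    omega
  have h02 : p ≠ p + v + v := by
    simp only [ne_eq, Prod.ext_iff, Prod.fst_add, Prod.snd_add]
    omega
  have h12 : p + v ≠ p + v + v := by
    simp only [ne_eq, Prod.ext_iff, Prod.fst_add, Prod.snd_add]
    omega
  refine ⟨p, p + v + v, q, p + v, ?_, ?_, ?_, ?_, ?_⟩
  · -- det nonzero
    have h2 : det2 (p + v + v - p) (q - p) = 2 * det2 v (q - p) := by
      simp only [det2, Prod.fst_sub, Prod.snd_sub, Prod.fst_add, Prod.snd_add]; ring
    rw [h2]; rcases hd with h | h <;> omega
  · exact (triPts_eq p v q hd).symm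
  · ext z
    simp only [Set.mem_insert_iff, Set.mem_singleton_iff]
    tauto
  · -- ncard
    rw [show ({p, p + v, p + v + v, q} : Set (ℤ × ℤ)) = {p, p+v, p+v+v, q} from rfl]
    rw [Set.ncard_insert_of_notMem (by simp only [Set.mem_insert_iff, Set.mem_singleton_iff]; push_neg; exact ⟨h01, h02, hqp.symm⟩),
        Set.ncard_insert_of_notMem (by simp only [Set.mem_insert_iff, Set.mem_singleton_iff]; push_neg; exact ⟨h12, hq1.symm⟩),
        Set.ncard_insert_of_notMem (by simp only [Set.mem_singleton_iff]; exact hq2.symm),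
        Set.ncard_singleton]
  · -- p + v not in interior
    intro hmem
    set e : ℝ := (det2 v (q - p) : ℝ) with he
    have he2 : e * e = 1 := by
      rcases hd with h | h <;> rw [he, h] <;> norm_num
    -- halfspace
    have hlin : IsLinearMap ℝ (fun z : ℝ × ℝ => e * gR v z) := by
      constructor
      · intro a b; rw [(gR_linear v).map_add]; ring
      · intro c a; rw [(gR_linear v).map_smul]; simp only [smul_eq_mul]; ring
    set K : Set (ℝ × ℝ) := {z | e * gR v (toR p) ≤ e * gR v z} with hK
    have hKconv : Convex ℝ K := convex_halfSpace_ge hlin _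
    have hsub : convexHull ℝ {toR p, toR (p+v+v), toR q} ⊆ K := by
      apply convexHull_min _ hKconv
      intro z hz
      rcases hz with rfl | rfl | rfl
      · simp [hK]
      · have : gR v (toR (p + v + v)) = gR v (toR p) := by
          rw [gR_toR, gR_toR]
          have : det2 v (p + v + v) = det2 v p := by
            simp only [det2, Prod.fst_add, Prod.snd_add]; ring
          rw [this]
        simp [hK, this]
      · have : gR v (toR q) = gR v (toR p) + e := by
          rw [gR_toR, gR_toR, he]
          have : det2 v q = det2 v p + det2 v (q - p) := by
            simp only [det2, Prod.fst_sub, Prod.snd_sub]; ring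
          rw [this]; push_cast; ring
        simp only [hK, Set.mem_setOf_eq, this]
        nlinarith
    have hmemK : toR (p + v) ∈ interior K := interior_mono hsub hmem
    rw [mem_interior_iff_mem_nhds, Metric.mem_nhds_iff] at hmemK
    obtain ⟨ε, hε, hball⟩ := hmemK
    set n : ℝ × ℝ := e • ((v.2 : ℝ), -(v.1 : ℝ)) with hn
    set δ : ℝ := ε / (‖n‖ + 1) with hδ
    have hnorm : (0:ℝ) < ‖n‖ + 1 := by positivity
    have hδpos : 0 < δ := by rw [hδ]; positivity
    have hwball : toR (p + v) + δ • n ∈ Metric.ball (toR (p + v)) ε := by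
      rw [Metric.mem_ball, dist_eq_norm, add_sub_cancel_left, norm_smul,
        Real.norm_eq_abs, abs_of_pos hδpos]
      calc δ * ‖n‖ < δ * (‖n‖ + 1) := by nlinarith [norm_nonneg n]
      _ = ε := by rw [hδ]; field_simp
    have hwK := hball hwball
    rw [hK, Set.mem_setOf_eq] at hwK
    -- compute
    have hgn : gR v n = -e * ((v.1:ℝ)^2 + (v.2:ℝ)^2) := by
      rw [hn, (gR_linear v).map_smul, smul_eq_mul]
      simp only [gR]
      ring
    have hgpv : gR v (toR (p + v)) = gR v (toR p) := by
      rw [gR_toR, gR_toR]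
      have : det2 v (p + v) = det2 v p := by
        simp only [det2, Prod.fst_add, Prod.snd_add]; ring
      rw [this]
    have hcomp : gR v (toR (p + v) + δ • n) = gR v (toR p) + δ * gR v n := by
      rw [(gR_linear v).map_add, (gR_linear v).map_smul, smul_eq_mul, hgpv]
    rw [hcomp, hgn] at hwK
    have hN : (0:ℝ) < (v.1:ℝ)^2 + (v.2:ℝ)^2 := by
      rcases hv1 with h | h
      · nlinarith [sq_nonneg (v.2:ℝ),
          sq_pos_of_ne_zero (show (v.1:ℝ) ≠ 0 from Int.cast_ne_zero.2 h)]
      · nlinarith [sq_nonneg (v.1:ℝ),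
          sq_pos_of_ne_zero (show (v.2:ℝ) ≠ 0 from Int.cast_ne_zero.2 h)]
    have heq : e * (gR v (toR p) + δ * (-e * ((v.1:ℝ)^2 + (v.2:ℝ)^2)))
        = e * gR v (toR p) - δ * ((v.1:ℝ)^2 + (v.2:ℝ)^2) := by
      linear_combination (-(δ * ((v.1:ℝ)^2 + (v.2:ℝ)^2))) * he2
    rw [heq] at hwK
    nlinarith [mul_pos hδpos hN]



lemma ncard_triple_le (a b c : ℤ × ℤ) : ({a, b, c} : Set (ℤ × ℤ)).ncard ≤ 3 := by
  have h1 := Set.ncard_insert_le a ({b, c} : Set (ℤ × ℤ))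
  have h2 := Set.ncard_insert_le b ({c} : Set (ℤ × ℤ))
  have h3 := Set.ncard_singleton c
  omega

lemma card_force {S T : Set (ℤ × ℤ)} {a b c d : ℤ × ℤ}
    (hT : T = {a, b, c, d}) (h4 : T.ncard = 4) (hne : (T ∩ S).ncard ≠ 3)
    (ha : a ∈ S) (hb : b ∈ S) (hc : c ∈ S) : d ∈ S := by
  subst hT
  have hfin : ({a, b, c, d} : Set (ℤ × ℤ)).Finite := Set.toFinite _
  have hab : a ≠ b := by
    rintro rfl
    have e : ({a, a, c, d} : Set (ℤ × ℤ)) = {a, c, d} := by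
      ext z; simp only [Set.mem_insert_iff, Set.mem_singleton_iff]; tauto
    rw [e] at h4
    have := ncard_triple_le a c d; omega
  have hac : a ≠ c := by
    rintro rfl
    have e : ({a, b, a, d} : Set (ℤ × ℤ)) = {a, b, d} := by
      ext z; simp only [Set.mem_insert_iff, Set.mem_singleton_iff]; tauto
    rw [e] at h4
    have := ncard_triple_le a b d; omega
  have hbc : b ≠ c := by
    rintro rfl
    have e : ({a, b, b, d} : Set (ℤ × ℤ)) = {a, b, d} := by
      ext z; simp only [Set.mem_insert_iff, Set.mem_singleton_iff]; tauto
    rw [e] at h4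
    have := ncard_triple_le a b d; omega
  have h3 : ({a, b, c} : Set (ℤ × ℤ)).ncard = 3 := by
    rw [Set.ncard_insert_of_notMem (by simp [hab, hac]),
        Set.ncard_insert_of_notMem (by simp [hbc]), Set.ncard_singleton]
  have hsub : ({a, b, c} : Set (ℤ × ℤ)) ⊆ {a, b, c, d} ∩ S := by
    intro z hz
    rcases hz with rfl | rfl | rfl
    · exact ⟨by simp, ha⟩
    · exact ⟨by simp, hb⟩
    · exact ⟨by simp, hc⟩
  have hle : 3 ≤ (({a, b, c, d} : Set (ℤ × ℤ)) ∩ S).ncard := by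
    have := Set.ncard_le_ncard hsub (hfin.inter_of_left S)
    omega
  have hle2 : (({a, b, c, d} : Set (ℤ × ℤ)) ∩ S).ncard ≤ 4 := by
    have := Set.ncard_le_ncard (Set.inter_subset_left (s := ({a,b,c,d} : Set (ℤ×ℤ))) (t := S)) hfin
    omega
  have heq : ({a, b, c, d} : Set (ℤ × ℤ)) ∩ S = {a, b, c, d} :=
    Set.eq_of_subset_of_ncard_le Set.inter_subset_left (by omega) hfin
  have hd : d ∈ ({a, b, c, d} : Set (ℤ × ℤ)) ∩ S := by
    rw [heq]; simp
  exact hd.2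

lemma forceA {S : Set (ℤ × ℤ)} (hB : BStable S) (p v q : ℤ × ℤ)
    (hd : det2 v (q - p) = 1 ∨ det2 v (q - p) = -1)
    (h1 : p ∈ S) (h2 : p + v ∈ S) (h3 : p + v + v ∈ S) : q ∈ S := by
  have hbt := isBorderTri_main p v q hd
  have h4 : ({p, p+v, p+v+v, q} : Set (ℤ × ℤ)).ncard = 4 := by
    obtain ⟨a, b, c, d, _, _, _, h4, _⟩ := hbt; exact h4
  exact card_force rfl h4 (hB _ hbt) h1 h2 h3

lemma forceB {S : Set (ℤ × ℤ)} (hB : BStable S) (p v q : ℤ × ℤ)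
    (hd : det2 v (q - p) = 1 ∨ det2 v (q - p) = -1)
    (h1 : p ∈ S) (h3 : p + v + v ∈ S) (hq : q ∈ S) : p + v ∈ S := by
  have hbt := isBorderTri_main p v q hd
  have h4 : ({p, p+v, p+v+v, q} : Set (ℤ × ℤ)).ncard = 4 := by
    obtain ⟨a, b, c, d, _, _, _, h4, _⟩ := hbt; exact h4
  have hT : ({p, p+v, p+v+v, q} : Set (ℤ × ℤ)) = {p, p+v+v, q, p+v} := by
    ext z; simp only [Set.mem_insert_iff, Set.mem_singleton_iff]; tauto
  exact card_force hT h4 (hB _ hbt) h1 h3 hq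

lemma forceC {S : Set (ℤ × ℤ)} (hB : BStable S) (p v q : ℤ × ℤ)
    (hd : det2 v (q - p) = 1 ∨ det2 v (q - p) = -1)
    (h1 : p ∈ S) (h2 : p + v ∈ S) (hq : q ∈ S) : p + v + v ∈ S := by
  have hbt := isBorderTri_main p v q hd
  have h4 : ({p, p+v, p+v+v, q} : Set (ℤ × ℤ)).ncard = 4 := by
    obtain ⟨a, b, c, d, _, _, _, h4, _⟩ := hbt; exact h4
  have hT : ({p, p+v, p+v+v, q} : Set (ℤ × ℤ)) = {p, p+v, q, p+v+v} := by
    ext z; simp only [Set.mem_insert_iff, Set.mem_singleton_iff]; tauto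
  exact card_force hT h4 (hB _ hbt) h1 h2 hq

lemma memS_congr {S : Set (ℤ × ℤ)} {a b : ℤ × ℤ} (h : a ∈ S) (e : b = a) : b ∈ S := by
  rw [e]; exact h

lemma pair_eq {a b c d : ℤ} (h1 : a = c) (h2 : b = d) : ((a, b) : ℤ × ℤ) = (c, d) := by
  rw [h1, h2]

lemma keyApex {S : Set (ℤ × ℤ)} (hB : BStable S) (a b e t : ℤ) (he : e = 1 ∨ e = -1)
    (h1 : ((a, b) : ℤ × ℤ) ∈ S) (h2 : ((a + 1, b) : ℤ × ℤ) ∈ S)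
    (h3 : ((a + 2, b) : ℤ × ℤ) ∈ S) : ((t, b + e) : ℤ × ℤ) ∈ S := by
  have hdv : det2 (1, 0) (((t, b + e) : ℤ × ℤ) - (a, b)) = e := by
    simp [det2]
  have hd : det2 (1, 0) (((t, b + e) : ℤ × ℤ) - (a, b)) = 1 ∨
      det2 (1, 0) (((t, b + e) : ℤ × ℤ) - (a, b)) = -1 := by
    rw [hdv]; exact he
  refine forceA hB (a, b) (1, 0) (t, b + e) hd h1 (memS_congr h2 (by simp))
    (memS_congr h3 ?_)
  simp only [Prod.mk_add_mk, Prod.mk.injEq] <;> omega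

lemma keyMid {S : Set (ℤ × ℤ)} (hB : BStable S) (px py wx wy qx qy : ℤ)
    (hd : wx * (qy - py) - wy * (qx - px) = 1 ∨ wx * (qy - py) - wy * (qx - px) = -1)
    (hp : ((px, py) : ℤ × ℤ) ∈ S) (hpww : ((px + wx + wx, py + wy + wy) : ℤ × ℤ) ∈ S)
    (hq : ((qx, qy) : ℤ × ℤ) ∈ S) : ((px + wx, py + wy) : ℤ × ℤ) ∈ S := by
  have hdv : det2 (wx, wy) (((qx, qy) : ℤ × ℤ) - (px, py)) =
      wx * (qy - py) - wy * (qx - px) := by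
    simp [det2]
  have hd' : det2 (wx, wy) (((qx, qy) : ℤ × ℤ) - (px, py)) = 1 ∨
      det2 (wx, wy) (((qx, qy) : ℤ × ℤ) - (px, py)) = -1 := by
    rw [hdv]; exact hd
  have hm := forceB hB (px, py) (wx, wy) (qx, qy) hd' hp
    (memS_congr hpww (by simp only [Prod.mk_add_mk, Prod.mk.injEq] <;> omega)) hq
  exact memS_congr hm (by simp only [Prod.mk_add_mk, Prod.mk.injEq] <;> omega)

lemma keyExt {S : Set (ℤ × ℤ)} (hB : BStable S) (a b t e : ℤ) (he : e = 1 ∨ e = -1)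
    (h1 : ((a, b) : ℤ × ℤ) ∈ S) (h2 : ((a + 1, b) : ℤ × ℤ) ∈ S)
    (hq : ((t, b + e) : ℤ × ℤ) ∈ S) : ((a + 2, b) : ℤ × ℤ) ∈ S := by
  have hdv : det2 (1, 0) (((t, b + e) : ℤ × ℤ) - (a, b)) = e := by
    simp [det2]
  have hd : det2 (1, 0) (((t, b + e) : ℤ × ℤ) - (a, b)) = 1 ∨
      det2 (1, 0) (((t, b + e) : ℤ × ℤ) - (a, b)) = -1 := by
    rw [hdv]; exact he
  have hm := forceC hB (a, b) (1, 0) (t, b + e) hd h1 (memS_congr h2 (by simp)) hq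
  exact memS_congr hm (by simp only [Prod.mk_add_mk, Prod.mk.injEq] <;> omega)

lemma triple_univ {S : Set (ℤ × ℤ)} (hB : BStable S) (a b : ℤ)
    (h1 : ((a, b) : ℤ × ℤ) ∈ S) (h2 : ((a + 1, b) : ℤ × ℤ) ∈ S)
    (h3 : ((a + 2, b) : ℤ × ℤ) ∈ S) : S = Set.univ := by
  have step : ∀ c : ℤ, (∀ t, ((t, c) : ℤ × ℤ) ∈ S) →
      ∀ t e, e = 1 ∨ e = -1 → ((t, c + e) : ℤ × ℤ) ∈ S := by
    intro c hc t e he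
    exact keyApex hB 0 c e t he (hc 0) (hc (0 + 1)) (hc (0 + 2))
  have base : ∀ t e, e = 1 ∨ e = -1 → ((t, b + e) : ℤ × ℤ) ∈ S :=
    fun t e he => keyApex hB a b e t he h1 h2 h3
  have rows : ∀ k : ℕ, (∀ t, ((t, b + 1 + (k : ℤ)) : ℤ × ℤ) ∈ S) ∧
      (∀ t, ((t, b + 1 - (k : ℤ)) : ℤ × ℤ) ∈ S) := by
    intro k
    induction k with
    | zero =>
      refine ⟨fun t => ?_, fun t => ?_⟩
      · exact memS_congr (base t 1 (Or.inl rfl)) (by norm_num)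
      · exact memS_congr (base t 1 (Or.inl rfl)) (by norm_num)
    | succ n ih =>
      refine ⟨fun t => ?_, fun t => ?_⟩
      · exact memS_congr (step (b + 1 + (n : ℤ)) ih.1 t 1 (Or.inl rfl))
          (pair_eq rfl (by push_cast; omega))
      · exact memS_congr (step (b + 1 - (n : ℤ)) ih.2 t (-1) (Or.inr rfl))
          (pair_eq rfl (by push_cast; omega))
  apply Set.eq_univ_of_forall
  rintro ⟨t, m⟩
  rcases le_or_gt (b + 1) m with h | h
  · exact memS_congr ((rows (m - (b + 1)).toNat).1 t)
      (pair_eq rfl (by rw [Int.toNat_of_nonneg (by omega)]; omega))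
  · exact memS_congr ((rows ((b + 1) - m).toNat).2 t)
      (pair_eq rfl (by rw [Int.toNat_of_nonneg (by omega)]; omega))

lemma step_univ {S : Set (ℤ × ℤ)} (hB : BStable S) (x y c e : ℤ) (he : e = 1 ∨ e = -1)
    (h1 : ((x, y) : ℤ × ℤ) ∈ S) (h2 : ((x + 1, y) : ℤ × ℤ) ∈ S)
    (hq : ((c, y + e) : ℤ × ℤ) ∈ S) : S = Set.univ := by
  have h3 : ((x + 2, y) : ℤ × ℤ) ∈ S := keyExt hB x y c e he h1 h2 hq
  exact triple_univ hB x y h1 h2 h3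

lemma main1 {S : Set (ℤ × ℤ)} (hS : S ≠ Set.univ) (hB : BStable S)
    (x y : ℤ) (h1 : (x, y) ∈ S) (h2 : (x + 1, y) ∈ S) :
    ∀ x' y' : ℤ, |x - x'| ≤ 2 → |y - y'| ≤ 2 →
      (x', y') ≠ (x, y) → (x', y') ≠ (x + 1, y) → (x', y') ≠ (x - 2, y) →
      (x', y') ∉ S := by
  intro x' y' hx hy hne1 hne2 hne3 hC
  apply hS
  rw [abs_le] at hx hy
  have hdy : y' = y - 2 ∨ y' = y - 1 ∨ y' = y ∨ y' = y + 1 ∨ y' = y + 2 := by omega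
  rcases hdy with hdy | hdy | hdy | hdy | hdy
  · -- y' = y - 2
    have hdx : x' = x - 2 ∨ x' = x - 1 ∨ x' = x ∨ x' = x + 1 ∨ x' = x + 2 := by omega
    rcases hdx with hdx | hdx | hdx | hdx | hdx
    · exact step_univ hB x y (x + -1) (-1) (Or.inr rfl) h1 h2
        (keyMid hB x y (-1) (-1) (x+1) y (by left; ring) h1
          (memS_congr hC (pair_eq (by omega) (by omega))) h2)
    · exact step_univ hB x y (x+1+ -1) (-1) (Or.inr rfl) h1 h2
        (keyMid hB (x+1) y (-1) (-1) x y (by right; ring) h2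
          (memS_congr hC (pair_eq (by omega) (by omega))) h1)
    · exact step_univ hB x y (x + 0) (-1) (Or.inr rfl) h1 h2
        (keyMid hB x y 0 (-1) (x+1) y (by left; ring) h1
          (memS_congr hC (pair_eq (by omega) (by omega))) h2)
    · exact step_univ hB x y (x+1+0) (-1) (Or.inr rfl) h1 h2
        (keyMid hB (x+1) y 0 (-1) x y (by right; ring) h2
          (memS_congr hC (pair_eq (by omega) (by omega))) h1)
    · exact step_univ hB x y (x + 1) (-1) (Or.inr rfl) h1 h2
        (keyMid hB x y 1 (-1) (x+1) y (by left; ring) h1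
          (memS_congr hC (pair_eq (by omega) (by omega))) h2)
  · -- y' = y - 1
    exact step_univ hB x y x' (-1) (Or.inr rfl) h1 h2
      (memS_congr hC (pair_eq rfl (by omega)))
  · -- y' = y
    have hxx1 : x' ≠ x := fun h => hne1 (pair_eq h hdy)
    have hxx2 : x' ≠ x + 1 := fun h => hne2 (pair_eq h hdy)
    have hxx3 : x' ≠ x - 2 := fun h => hne3 (pair_eq h hdy)
    have hdx : x' = x - 1 ∨ x' = x + 2 := by omega
    rcases hdx with hdx | hdx
    · exact triple_univ hB (x-1) y (memS_congr hC (pair_eq (by omega) (by omega)))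
        (memS_congr h1 (pair_eq (by ring) rfl))
        (memS_congr h2 (pair_eq (by ring) rfl))
    · exact triple_univ hB x y h1 h2 (memS_congr hC (pair_eq (by omega) (by omega)))
  · -- y' = y + 1
    exact step_univ hB x y x' 1 (Or.inl rfl) h1 h2
      (memS_congr hC (pair_eq rfl (by omega)))
  · -- y' = y + 2
    have hdx : x' = x - 2 ∨ x' = x - 1 ∨ x' = x ∨ x' = x + 1 ∨ x' = x + 2 := by omega
    rcases hdx with hdx | hdx | hdx | hdx | hdx
    · exact step_univ hB x y (x + -1) 1 (Or.inl rfl) h1 h2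
        (keyMid hB x y (-1) 1 (x+1) y (by right; ring) h1
          (memS_congr hC (pair_eq (by omega) (by omega))) h2)
    · exact step_univ hB x y (x+1+ -1) 1 (Or.inl rfl) h1 h2
        (keyMid hB (x+1) y (-1) 1 x y (by left; ring) h2
          (memS_congr hC (pair_eq (by omega) (by omega))) h1)
    · exact step_univ hB x y (x + 0) 1 (Or.inl rfl) h1 h2
        (keyMid hB x y 0 1 (x+1) y (by right; ring) h1
          (memS_congr hC (pair_eq (by omega) (by omega))) h2)
    · exact step_univ hB x y (x+1+0) 1 (Or.inl rfl) h1 h2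
        (keyMid hB (x+1) y 0 1 x y (by left; ring) h2
          (memS_congr hC (pair_eq (by omega) (by omega))) h1)
    · exact step_univ hB x y (x + 1) 1 (Or.inl rfl) h1 h2
        (keyMid hB x y 1 1 (x+1) y (by right; ring) h1
          (memS_congr hC (pair_eq (by omega) (by omega))) h2)



theorem stmt13 (S : Set (ℤ × ℤ)) (hS : S ≠ Set.univ) (hB : BStable S)
    (x y : ℤ) (h1 : (x, y) ∈ S) (h2 : (x + 1, y) ∈ S) :
    (∀ x' y' : ℤ, |x - x'| ≤ 2 → |y - y'| ≤ 2 →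
      (x', y') ≠ (x, y) → (x', y') ≠ (x + 1, y) → (x', y') ≠ (x - 2, y) →
      (x', y') ∉ S) ∧
    (∀ a b : ℤ, (Gamma S ∩ Set.Icc (a + 1, b + 1) (a + 3, b + 3)).ncard ≤ 1) := by
  constructor
  · exact main1 hS hB x y h1 h2
  · intro a b
    have hfin : (Gamma S ∩ Set.Icc (a + 1, b + 1) (a + 3, b + 3)).Finite :=
      (Set.finite_Icc _ _).subset Set.inter_subset_right
    rw [Set.ncard_le_one hfin]
    rintro ⟨p, q⟩ hp ⟨p', q'⟩ hp'
    simp only [Gamma, Set.mem_inter_iff, Set.mem_setOf_eq, Set.mem_Icc,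
      Prod.mk_le_mk] at hp hp'
    obtain ⟨⟨h1p, h2p⟩, ⟨hpa1, hpb1⟩, ⟨hpa3, hpb3⟩⟩ := hp
    obtain ⟨⟨h1p', h2p'⟩, ⟨hpa1', hpb1'⟩, ⟨hpa3', hpb3'⟩⟩ := hp'
    have key := main1 hS hB p q h1p h2p p' q' (by rw [abs_le]; omega) (by rw [abs_le]; omega)
    have htri : ((p', q') : ℤ × ℤ) = (p, q) ∨ ((p', q') : ℤ × ℤ) = (p + 1, q) ∨
        ((p', q') : ℤ × ℤ) = (p - 2, q) := by
      by_contra hcon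
      push_neg at hcon
      exact key hcon.1 hcon.2.1 hcon.2.2 h1p'
    rcases htri with h | h | h
    · exact h.symm
    · exfalso
      rw [Prod.mk.injEq] at h
      exact main1 hS hB p q h1p h2p (p + 1 + 1) q
        (by rw [abs_le]; omega) (by rw [abs_le]; omega)
        (by simp only [ne_eq, Prod.mk.injEq]; omega)
        (by simp only [ne_eq, Prod.mk.injEq]; omega)
        (by simp only [ne_eq, Prod.mk.injEq]; omega)
        (memS_congr h2p' (pair_eq (by omega) (by omega)))
    · exfalso
      rw [Prod.mk.injEq] at h
      exact main1 hS hB p q h1p h2p (p - 2 + 1) q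
        (by rw [abs_le]; omega) (by rw [abs_le]; omega)
        (by simp only [ne_eq, Prod.mk.injEq]; omega)
        (by simp only [ne_eq, Prod.mk.injEq]; omega)
        (by simp only [ne_eq, Prod.mk.injEq]; omega)
        (memS_congr h2p' (pair_eq (by omega) (by omega)))
end

section
/- The set J_{1/4} = ({(0,0),(1,0),(0,1),(−1,−1)} + 4ℤ²) is I-stable: every internal triangle that has three of its points in J_{1/4} has its fourth point in J_{1/4}. Moreover, the upper density of J_{1/4} is 1/4. -/
/-- The set `J_{1/4} = {(0,0),(1,0),(0,1),(−1,−1)} + 4ℤ²`. -/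
def J14 : Set (ℤ × ℤ) :=
  {p | ∃ m k : ℤ,
    p - (4 * m, 4 * k) ∈ ({(0, 0), (1, 0), (0, 1), (-1, -1)} : Set (ℤ × ℤ))}


lemma toR_comb (p q r : ℤ × ℤ) : toR (p + q - r) = toR p + toR q - toR r := by
  simp only [toR, Prod.ext_iff, Prod.fst_add, Prod.snd_add, Prod.fst_sub, Prod.snd_sub]
  constructor <;> push_cast <;> ring

/-- affine maps respect `x + y - z`. -/
lemma affine_comb (f : (ℝ × ℝ) →ᵃ[ℝ] ℝ) (x y z : ℝ × ℝ) :
    f (x + y - z) = f x + f y - f z := by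
  have h1 : f ((y - z) +ᵥ x) = f.linear (y - z) +ᵥ f x := f.map_vadd x (y - z)
  have h2 : f ((y - z) +ᵥ z) = f.linear (y - z) +ᵥ f z := f.map_vadd z (y - z)
  simp only [vadd_eq_add] at h1 h2
  have e1 : x + y - z = (y - z) + x := by ring
  have e2 : y = (y - z) + z := by ring
  rw [e1, h1]
  nth_rewrite 2 [e2]
  rw [h2]; ring

section Tri
variable {a b c : ℤ × ℤ}

lemma tri_affInd (h : det2 (b - a) (c - a) ≠ 0) :
    AffineIndependent ℝ ![toR a, toR b, toR c] := by
  have hdet : ((det2 (b - a) (c - a) : ℤ) : ℝ) ≠ 0 := by exact_mod_cast h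
  simp only [det2, Prod.fst_sub, Prod.snd_sub] at hdet
  push_cast at hdet
  rw [affineIndependent_iff_of_fintype]
  intro w hw0 hws
  rw [Finset.weightedVSub_eq_linear_combination _ hw0] at hws
  rw [Fin.sum_univ_three] at hw0 hws
  simp only [Matrix.cons_val_zero, Matrix.cons_val_one, Matrix.head_cons,
    Matrix.cons_val_two, Matrix.tail_cons] at hws
  have hws1 := congrArg Prod.fst hws
  have hws2 := congrArg Prod.snd hws
  simp only [Prod.fst_add, Prod.snd_add, Prod.smul_fst, Prod.smul_snd, smul_eq_mul,
    Prod.fst_zero, Prod.snd_zero, toR] at hws1 hws2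
  have h1 : w 1 = 0 := by
    have : w 1 * (((b.1 : ℝ) - a.1) * ((c.2 : ℝ) - a.2) - ((b.2 : ℝ) - a.2) * ((c.1 : ℝ) - a.1)) = 0 := by
      linear_combination ((c.2 : ℝ) - a.2) * hws1 - ((c.1 : ℝ) - a.1) * hws2 +
        (-(a.1 : ℝ) * ((c.2:ℝ) - a.2) + (a.2 : ℝ) * ((c.1:ℝ) - a.1)) * hw0
    rcases mul_eq_zero.1 this with h' | h'
    · exact h'
    · exact absurd h' hdet
  have h2 : w 2 = 0 := by
    have : w 2 * (((b.1 : ℝ) - a.1) * ((c.2 : ℝ) - a.2) - ((b.2 : ℝ) - a.2) * ((c.1 : ℝ) - a.1)) = 0 := by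
      linear_combination (-(b.2 : ℝ) + a.2) * hws1 + ((b.1 : ℝ) - a.1) * hws2 +
        ((a.1 : ℝ) * ((b.2:ℝ) - a.2) - (a.2 : ℝ) * ((b.1:ℝ) - a.1)) * hw0
    rcases mul_eq_zero.1 this with h' | h'
    · exact h'
    · exact absurd h' hdet
  have h0 : w 0 = 0 := by linarith [hw0, h1, h2]
  intro i
  fin_cases i <;> assumption

noncomputable def triBasis (h : det2 (b - a) (c - a) ≠ 0) :
    AffineBasis (Fin 3) ℝ (ℝ × ℝ) :=
  ⟨![toR a, toR b, toR c], tri_affInd h, by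
    rw [(tri_affInd h).affineSpan_eq_top_iff_card_eq_finrank_add_one]
    simp [Module.finrank_prod]⟩

lemma triBasis_range (h : det2 (b - a) (c - a) ≠ 0) :
    Set.range (triBasis h) = {toR a, toR b, toR c} := by
  ext x
  constructor
  · rintro ⟨i, rfl⟩
    fin_cases i
    · exact Or.inl rfl
    · exact Or.inr (Or.inl rfl)
    · exact Or.inr (Or.inr rfl)
  · rintro (rfl | rfl | rfl)
    exacts [⟨0, rfl⟩, ⟨1, rfl⟩, ⟨2, rfl⟩]

end Tri

section Main
variable {a b c d : ℤ × ℤ}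

lemma internal_structure (h : det2 (b - a) (c - a) ≠ 0)
    (hset : triPts a b c = {a, b, c, d})
    (hd : toR d ∈ interior (convexHull ℝ {toR a, toR b, toR c})) :
    (a.1 + b.1 + c.1 = 3 * d.1 ∧ a.2 + b.2 + c.2 = 3 * d.2) ∧
      (¬(2 ∣ a.1 - b.1 ∧ 2 ∣ a.2 - b.2)) ∧
      (¬(2 ∣ a.1 - c.1 ∧ 2 ∣ a.2 - c.2)) ∧
      (¬(2 ∣ b.1 - c.1 ∧ 2 ∣ b.2 - c.2)) := by
  classical
  set B := triBasis h with hB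
  set vL : Fin 3 → ℤ × ℤ := ![a, b, c] with hvL
  have hBv : ∀ i : Fin 3, B i = toR (vL i) := by
    intro i; fin_cases i <;> rfl
  have hcv : ∀ i j : Fin 3, B.coord i (toR (vL j)) = if i = j then 1 else 0 := by
    intro i j; rw [← hBv]; exact B.coord_apply i j
  have hex1 : ∀ j : Fin 3, ∃ k : Fin 3, k ≠ j := by decide
  have hex2 : ∀ i j : Fin 3, ∃ k : Fin 3, k ≠ i ∧ k ≠ j := by decide
  have hmem : ∀ p : ℤ × ℤ, p ∈ triPts a b c ↔ ∀ i, 0 ≤ B.coord i (toR p) := by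
    intro p
    have : ({toR a, toR b, toR c} : Set (ℝ × ℝ)) = Set.range B := (triBasis_range h).symm
    simp only [triPts, Set.mem_setOf_eq, this, B.convexHull_eq_nonneg_coord]
  have hdpos : ∀ i, 0 < B.coord i (toR d) := by
    rw [← triBasis_range h, B.interior_convexHull] at hd
    exact hd
  have hcomb : ∀ (i : Fin 3) (p q r : ℤ × ℤ),
      B.coord i (toR (p + q - r)) = B.coord i (toR p) + B.coord i (toR q) - B.coord i (toR r) := by
    intro i p q r; rw [toR_comb]; exact affine_comb (B.coord i) _ _ _
  -- membership in the 4-point set, via hset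
  have hsetmem : ∀ p : ℤ × ℤ, (∀ i, 0 ≤ B.coord i (toR p)) →
      p = a ∨ p = b ∨ p = c ∨ p = d := by
    intro p hp
    have : p ∈ triPts a b c := (hmem p).2 hp
    rw [hset] at this
    simpa using this
  -- vertices are distinct from d in coordinates
  have hvd : ∀ j : Fin 3, vL j ≠ d := by
    intro j hj
    obtain ⟨k, hk⟩ : ∃ k : Fin 3, k ≠ j := hex1 j
    have := hdpos k
    rw [← hj, hcv k j, if_neg hk] at this
    exact lt_irrefl _ this
  -- step 1: all coordinates of d are < 1/2
  have hhalf : ∀ i : Fin 3, B.coord i (toR d) < 1 / 2 := by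
    intro i
    by_contra hle
    push_neg at hle
    set e : ℤ × ℤ := d + d - vL i with he
    have hec : ∀ j, B.coord j (toR e) =
        2 * B.coord j (toR d) - (if j = i then 1 else 0) := by
      intro j; rw [hcomb j d d (vL i), hcv j i]; ring
    have hemem : ∀ j, 0 ≤ B.coord j (toR e) := by
      intro j; rw [hec j]
      by_cases hj : j = i
      · subst hj; rw [if_pos rfl]; linarith
      · rw [if_neg hj]; linarith [hdpos j]
    rcases hsetmem e hemem with h' | h' | h' | h'
    · obtain ⟨k, hk1, hk2⟩ : ∃ k : Fin 3, k ≠ i ∧ k ≠ 0 := hex2 i 0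
      have := congrArg (fun x => B.coord k (toR x)) h'
      rw [hec k, if_neg hk1, show (toR a) = toR (vL 0) from rfl, hcv k 0, if_neg hk2] at this
      linarith [hdpos k]
    · obtain ⟨k, hk1, hk2⟩ : ∃ k : Fin 3, k ≠ i ∧ k ≠ 1 := hex2 i 1
      have := congrArg (fun x => B.coord k (toR x)) h'
      rw [hec k, if_neg hk1, show (toR b) = toR (vL 1) from rfl, hcv k 1, if_neg hk2] at this
      linarith [hdpos k]
    · obtain ⟨k, hk1, hk2⟩ : ∃ k : Fin 3, k ≠ i ∧ k ≠ 2 := hex2 i 2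
      have := congrArg (fun x => B.coord k (toR x)) h'
      rw [hec k, if_neg hk1, show (toR c) = toR (vL 2) from rfl, hcv k 2, if_neg hk2] at this
      linarith [hdpos k]
    · obtain ⟨k, hk⟩ : ∃ k : Fin 3, k ≠ i := by
        refine ⟨if i = 0 then 1 else 0, ?_⟩
        split_ifs with h' <;> simp [h'] <;> omega
      have := congrArg (fun x => B.coord k (toR x)) h'
      rw [hec k, if_neg hk] at this
      linarith [hdpos k]
  -- step 2: centroid
  have hcent : a.1 + b.1 + c.1 = 3 * d.1 ∧ a.2 + b.2 + c.2 = 3 * d.2 := by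
    set e : ℤ × ℤ := a + b - d + c - d with he
    have hsum3 : ∀ j : Fin 3, B.coord j (toR a) + B.coord j (toR b) + B.coord j (toR c) = 1 := by
      intro j
      have h0 := hcv j 0; have h1 := hcv j 1; have h2 := hcv j 2
      simp only [hvL] at h0 h1 h2
      fin_cases j <;> simp_all
    have hec : ∀ j, B.coord j (toR e) = 1 - 2 * B.coord j (toR d) := by
      intro j
      have e1 : e = (a + b - d) + c - d := by rw [he]
      rw [e1, hcomb j (a + b - d) c d, hcomb j a b d]
      have hj := hsum3 j
      linarith
    have hemem : ∀ j, 0 ≤ B.coord j (toR e) := by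
      intro j; rw [hec j]; linarith [hhalf j]
    have key : e = d := by
      rcases hsetmem e hemem with h' | h' | h' | h'
      · exfalso
        have := congrArg (fun x => B.coord 0 (toR x)) h'
        rw [hec 0, show (toR a) = toR (vL 0) from rfl, hcv 0 0, if_pos rfl] at this
        linarith [hdpos 0]
      · exfalso
        have := congrArg (fun x => B.coord 1 (toR x)) h'
        rw [hec 1, show (toR b) = toR (vL 1) from rfl, hcv 1 1, if_pos rfl] at this
        linarith [hdpos 1]
      · exfalso
        have := congrArg (fun x => B.coord 2 (toR x)) h'
        rw [hec 2, show (toR c) = toR (vL 2) from rfl, hcv 2 2, if_pos rfl] at this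
        linarith [hdpos 2]
      · exact h'
    have k1 := congrArg Prod.fst key
    have k2 := congrArg Prod.snd key
    simp only [he, Prod.fst_add, Prod.fst_sub, Prod.snd_add, Prod.snd_sub] at k1 k2
    omega
  refine ⟨hcent, ?_⟩
  -- step 3: parity
  have parity : ∀ i j : Fin 3, i ≠ j →
      ¬(2 ∣ (vL i).1 - (vL j).1 ∧ 2 ∣ (vL i).2 - (vL j).2) := by
    intro i j hij ⟨⟨u, hu⟩, ⟨v, hv⟩⟩
    set m : ℤ × ℤ := (((vL i).1 + (vL j).1) / 2, ((vL i).2 + (vL j).2) / 2) with hm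
    have hmid : vL i + vL j - m = m := by
      have : (2 : ℤ) ∣ (vL i).1 + (vL j).1 := ⟨(vL j).1 + u, by omega⟩
      apply Prod.ext
      · simp only [hm, Prod.fst_add, Prod.fst_sub]; omega
      · simp only [hm, Prod.snd_add, Prod.snd_sub]; omega
    have hmc : ∀ k, 2 * B.coord k (toR m) =
        (if k = i then 1 else 0) + (if k = j then 1 else 0) := by
      intro k
      have := hcomb k (vL i) (vL j) m
      rw [hmid, hcv k i, hcv k j] at this
      linarith
    have hmmem : ∀ k, 0 ≤ B.coord k (toR m) := by
      intro k
      have := hmc k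
      split_ifs at this <;> linarith
    have hvLmem : ∀ l : Fin 3, m ≠ vL l := by
      intro l hl
      have := hmc l
      rw [hl, hcv l l, if_pos rfl] at this
      split_ifs at this with p1 p2 p2
      · exact hij (p1 ▸ p2 ▸ rfl)
      · norm_num at this
      · norm_num at this
      · norm_num at this
    have hdm : m ≠ d := by
      intro hl
      obtain ⟨k, hk1, hk2⟩ : ∃ k : Fin 3, k ≠ i ∧ k ≠ j := hex2 i j
      have := hmc k
      rw [hl, if_neg hk1, if_neg hk2] at this
      linarith [hdpos k]
    rcases hsetmem m hmmem with h' | h' | h' | h'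
    · exact hvLmem 0 h'
    · exact hvLmem 1 h'
    · exact hvLmem 2 h'
    · exact hdm h'
  refine ⟨parity 0 1 (by decide), parity 0 2 (by decide), parity 1 2 (by decide)⟩

end Main

lemma mem_J14_iff (p : ℤ × ℤ) : p ∈ J14 ↔
    ((p.1 % 4 = 0 ∧ p.2 % 4 = 0) ∨ (p.1 % 4 = 1 ∧ p.2 % 4 = 0) ∨
     (p.1 % 4 = 0 ∧ p.2 % 4 = 1) ∨ (p.1 % 4 = 3 ∧ p.2 % 4 = 3)) := by
  constructor
  · rintro ⟨m, k, (h | h | h | h)⟩ <;>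
    · have h1 := congrArg Prod.fst h
      have h2 := congrArg Prod.snd h
      simp only [Prod.fst_sub, Prod.snd_sub] at h1 h2
      omega
  · have hp : ∀ m k : ℤ, p - (4 * m, 4 * k) = (p.1 - 4 * m, p.2 - 4 * k) := by
      intro m k; apply Prod.ext <;> simp
    intro h
    rcases h with ⟨h1, h2⟩ | ⟨h1, h2⟩ | ⟨h1, h2⟩ | ⟨h1, h2⟩
    · exact ⟨p.1 / 4, p.2 / 4, Or.inl (by rw [hp, Prod.mk.injEq]; omega)⟩
    · exact ⟨p.1 / 4, p.2 / 4, Or.inr (Or.inl (by rw [hp, Prod.mk.injEq]; omega))⟩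
    · exact ⟨p.1 / 4, p.2 / 4, Or.inr (Or.inr (Or.inl (by rw [hp, Prod.mk.injEq]; omega)))⟩
    · refine ⟨(p.1 + 1) / 4, (p.2 + 1) / 4, Or.inr (Or.inr (Or.inr ?_))⟩
      rw [hp, Set.mem_singleton_iff, Prod.mk.injEq]
      omega


set_option maxHeartbeats 1000000 in
lemma helper_vertex (a b c d : ℤ × ℤ)
    (hcent1 : a.1 + b.1 + c.1 = 3 * d.1) (hcent2 : a.2 + b.2 + c.2 = 3 * d.2)
    (h12 : ¬(2 ∣ a.1 - b.1 ∧ 2 ∣ a.2 - b.2))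
    (h13 : ¬(2 ∣ a.1 - c.1 ∧ 2 ∣ a.2 - c.2))
    (h23 : ¬(2 ∣ b.1 - c.1 ∧ 2 ∣ b.2 - c.2))
    (hb : b ∈ J14) (hc : c ∈ J14) (hd : d ∈ J14) : a ∈ J14 := by
  rw [mem_J14_iff] at hb hc hd ⊢
  omega

set_option maxHeartbeats 1000000 in
lemma helper_centroid (a b c d : ℤ × ℤ)
    (hcent1 : a.1 + b.1 + c.1 = 3 * d.1) (hcent2 : a.2 + b.2 + c.2 = 3 * d.2)
    (h12 : ¬(2 ∣ a.1 - b.1 ∧ 2 ∣ a.2 - b.2))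
    (h13 : ¬(2 ∣ a.1 - c.1 ∧ 2 ∣ a.2 - c.2))
    (h23 : ¬(2 ∣ b.1 - c.1 ∧ 2 ∣ b.2 - c.2))
    (ha : a ∈ J14) (hc : b ∈ J14) (hd : c ∈ J14) : d ∈ J14 := by
  rw [mem_J14_iff] at ha hc hd ⊢
  omega

def Rfin : Finset (ℤ × ℤ) := {(0,0),(1,0),(0,1),(3,3)}

def fmap (q : (ℤ × ℤ) × (ℤ × ℤ)) : ℤ × ℤ := (q.1.1 + 4 * q.2.1, q.1.2 + 4 * q.2.2)

@[simp] lemma fmap_mk (r mk : ℤ × ℤ) : fmap (r, mk) = (r.1 + 4 * mk.1, r.2 + 4 * mk.2) := rfl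

lemma mem_Rfin (r : ℤ × ℤ) : r ∈ Rfin ↔
    (r.1 = 0 ∧ r.2 = 0) ∨ (r.1 = 1 ∧ r.2 = 0) ∨ (r.1 = 0 ∧ r.2 = 1) ∨ (r.1 = 3 ∧ r.2 = 3) := by
  simp only [Rfin, Finset.mem_insert, Finset.mem_singleton, Prod.ext_iff]

lemma boxmem (n : ℕ) (p : ℤ × ℤ) :
    p ∈ Set.Icc (-(n : ℤ), -(n : ℤ)) ((n : ℤ), (n : ℤ)) ↔
      -(n:ℤ) ≤ p.1 ∧ p.1 ≤ n ∧ -(n:ℤ) ≤ p.2 ∧ p.2 ≤ n := by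
  simp only [Set.mem_Icc, Prod.le_def]
  tauto

lemma count_lower (n : ℕ) (hn : 5 ≤ n) :
    ((n:ℤ) - 5)^2 ≤ ((J14 ∩ Set.Icc (-(n : ℤ), -(n : ℤ)) ((n : ℤ), (n : ℤ))).ncard : ℤ) := by
  classical
  set L : Finset ℤ := Finset.Icc (-((n:ℤ)/4)) (((n:ℤ)-3)/4) with hL
  set G : Finset ((ℤ × ℤ) × (ℤ × ℤ)) := Rfin ×ˢ (L ×ˢ L) with hG
  have hfin : (Set.Icc (-(n : ℤ), -(n : ℤ)) ((n : ℤ), (n : ℤ))).Finite := Set.finite_Icc _ _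
  have hSfin : (J14 ∩ Set.Icc (-(n : ℤ), -(n : ℤ)) ((n : ℤ), (n : ℤ))).Finite :=
    hfin.subset Set.inter_subset_right
  have himage : ↑(G.image fmap) ⊆ J14 ∩ Set.Icc (-(n : ℤ), -(n : ℤ)) ((n : ℤ), (n : ℤ)) := by
    intro p hp
    simp only [Finset.coe_image, Set.mem_image, Finset.mem_coe] at hp
    obtain ⟨x, hx, rfl⟩ := hp
    rw [hG, Finset.mem_product, Finset.mem_product] at hx
    obtain ⟨hr, hm, hk⟩ := hx
    rw [mem_Rfin] at hr
    rw [Finset.mem_Icc] at hm hk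
    constructor
    · rw [mem_J14_iff]; simp only [fmap]; omega
    · rw [boxmem]; simp only [fmap]; omega
  have hinj : Set.InjOn fmap ↑G := by
    intro x h1 y h2 heq
    rw [Finset.mem_coe, hG, Finset.mem_product, Finset.mem_product] at h1 h2
    have hr := (mem_Rfin x.1).1 h1.1
    have hr' := (mem_Rfin y.1).1 h2.1
    have e1 := congrArg Prod.fst heq
    have e2 := congrArg Prod.snd heq
    simp only [fmap] at e1 e2
    have hc : x.1.1 = y.1.1 ∧ x.1.2 = y.1.2 ∧ x.2.1 = y.2.1 ∧ x.2.2 = y.2.2 := by omega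
    exact Prod.ext (Prod.ext hc.1 hc.2.1) (Prod.ext hc.2.2.1 hc.2.2.2)
  have hcard1 : (G.image fmap).card = G.card := Finset.card_image_of_injOn hinj
  have hle : (G.image fmap).card ≤
      (J14 ∩ Set.Icc (-(n : ℤ), -(n : ℤ)) ((n : ℤ), (n : ℤ))).ncard := by
    rw [← Set.ncard_coe_finset]
    exact Set.ncard_le_ncard himage hSfin
  have hGcard : G.card = 4 * (L.card * L.card) := by
    have hR4 : Rfin.card = 4 := by decide
    rw [hG, Finset.card_product, Finset.card_product, hR4]
  have hLcard : (L.card : ℤ) = ((n:ℤ)-3)/4 + 1 + (n:ℤ)/4 := by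
    rw [hL, Int.card_Icc]
    rw [Int.toNat_of_nonneg (by omega)]
    ring
  have h2L : (n:ℤ) - 5 ≤ 2 * (L.card : ℤ) := by omega
  have hsq : ((n:ℤ) - 5)^2 ≤ (2 * (L.card : ℤ))^2 := by
    apply pow_le_pow_left₀ (by omega) h2L
  calc ((n:ℤ) - 5)^2 ≤ (2 * (L.card : ℤ))^2 := hsq
    _ = (4 * (L.card * L.card) : ℤ) := by ring
    _ = (G.card : ℤ) := by rw [hGcard]; push_cast; ring
    _ = ((G.image fmap).card : ℤ) := by rw [hcard1]
    _ ≤ _ := by exact_mod_cast hle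

lemma count_upper (n : ℕ) :
    ((J14 ∩ Set.Icc (-(n : ℤ), -(n : ℤ)) ((n : ℤ), (n : ℤ))).ncard : ℤ) ≤ ((n:ℤ) + 5)^2 := by
  classical
  set U : Finset ℤ := Finset.Icc ((-(n:ℤ)-3)/4) ((n:ℤ)/4) with hU
  set G : Finset ((ℤ × ℤ) × (ℤ × ℤ)) := Rfin ×ˢ (U ×ˢ U) with hG
  have hsub : J14 ∩ Set.Icc (-(n : ℤ), -(n : ℤ)) ((n : ℤ), (n : ℤ)) ⊆ ↑(G.image fmap) := by
    intro p hp
    obtain ⟨hpJ, hpbox⟩ := hp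
    rw [mem_J14_iff] at hpJ
    rw [boxmem] at hpbox
    simp only [Finset.coe_image, Set.mem_image, Finset.mem_coe]
    refine ⟨((p.1 % 4, p.2 % 4), (p.1 / 4, p.2 / 4)), ?_, ?_⟩
    · rw [hG, Finset.mem_product, Finset.mem_product]
      refine ⟨?_, ?_, ?_⟩
      · rw [mem_Rfin]; dsimp only; omega
      · rw [hU, Finset.mem_Icc]; dsimp only; constructor <;> omega
      · rw [hU, Finset.mem_Icc]; dsimp only; constructor <;> omega
    · have : fmap ((p.1 % 4, p.2 % 4), (p.1 / 4, p.2 / 4)) =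
          (p.1 % 4 + 4 * (p.1 / 4), p.2 % 4 + 4 * (p.2 / 4)) := rfl
      rw [this]
      apply Prod.ext <;> dsimp only <;> omega
  have hle : (J14 ∩ Set.Icc (-(n : ℤ), -(n : ℤ)) ((n : ℤ), (n : ℤ))).ncard ≤ G.card := by
    calc (J14 ∩ Set.Icc (-(n : ℤ), -(n : ℤ)) ((n : ℤ), (n : ℤ))).ncard
        ≤ (↑(G.image fmap) : Set (ℤ × ℤ)).ncard :=
          Set.ncard_le_ncard hsub (Set.toFinite _)
      _ = (G.image fmap).card := Set.ncard_coe_finset _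
      _ ≤ G.card := Finset.card_image_le
  have hGcard : G.card = 4 * (U.card * U.card) := by
    have hR4 : Rfin.card = 4 := by decide
    rw [hG, Finset.card_product, Finset.card_product, hR4]
  have hUcard : (U.card : ℤ) = (n:ℤ)/4 + 1 - ((-(n:ℤ)-3)/4) := by
    rw [hU, Int.card_Icc]
    rw [Int.toNat_of_nonneg (by omega)]
  have h2U : 2 * (U.card : ℤ) ≤ (n:ℤ) + 5 := by omega
  have hsq : (2 * (U.card : ℤ))^2 ≤ ((n:ℤ) + 5)^2 := by
    apply pow_le_pow_left₀ (by positivity) h2U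
  calc ((J14 ∩ Set.Icc (-(n : ℤ), -(n : ℤ)) ((n : ℤ), (n : ℤ))).ncard : ℤ)
      ≤ (G.card : ℤ) := by exact_mod_cast hle
    _ = 4 * ((U.card : ℤ) * U.card) := by rw [hGcard]; push_cast; ring
    _ = (2 * (U.card : ℤ))^2 := by ring
    _ ≤ ((n:ℤ) + 5)^2 := hsq

open Filter

lemma aux_tendsto (c : ℝ) :
    Tendsto (fun n : ℕ => (((n : ℝ) + c) / (2 * (n : ℝ) + 1)) ^ 2) atTop (nhds (1/4)) := by
  have hd : Tendsto (fun n : ℕ => 2 * (n : ℝ) + 1) atTop atTop := by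
    apply tendsto_atTop_add_const_right
    exact Tendsto.const_mul_atTop two_pos tendsto_natCast_atTop_atTop
  have h0 : Tendsto (fun n : ℕ => (c - 1/2) / (2 * (n : ℝ) + 1)) atTop (nhds 0) :=
    Tendsto.div_atTop tendsto_const_nhds hd
  have h1 : Tendsto (fun n : ℕ => ((n : ℝ) + c) / (2 * (n : ℝ) + 1)) atTop (nhds (1/2)) := by
    have heq : ∀ n : ℕ, 1/2 + (c - 1/2) / (2 * (n : ℝ) + 1) = ((n : ℝ) + c) / (2 * (n : ℝ) + 1) := by
      intro n
      have hne : (2 * (n : ℝ) + 1) ≠ 0 := by positivity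
      field_simp
      ring
    have := (tendsto_const_nhds (x := (1:ℝ)/2) (f := atTop)).add h0
    rw [add_zero] at this
    exact this.congr heq
  have h2 := h1.pow 2
  norm_num at h2
  exact h2

lemma density14 : upperDensity J14 = 1 / 4 := by
  have hlow := aux_tendsto (-5)
  have hup := aux_tendsto 5
  have hmain : Tendsto (fun n : ℕ =>
      ((J14 ∩ Set.Icc (-(n : ℤ), -(n : ℤ)) ((n : ℤ), (n : ℤ))).ncard : ℝ) /
        (2 * (n : ℝ) + 1) ^ 2) atTop (nhds (1/4)) := by
    apply tendsto_of_tendsto_of_tendsto_of_le_of_le' hlow hup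
    · filter_upwards [eventually_ge_atTop 5] with n hn
      rw [div_pow]
      gcongr
      have h := count_lower n hn
      have he : (n:ℝ) + (-5) = (n:ℝ) - 5 := by ring
      rw [he]
      exact_mod_cast h
    · filter_upwards [eventually_ge_atTop 5] with n hn
      rw [div_pow]
      gcongr
      have h := count_upper n
      exact_mod_cast h
  exact hmain.limsup_eq

theorem stmt14 :
    (∀ T : Set (ℤ × ℤ), IsInternalTri T → ∀ p ∈ T, T \ {p} ⊆ J14 → p ∈ J14) ∧
    upperDensity J14 = 1 / 4 := by
  constructor
  · intro T hT p hp hsub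
    obtain ⟨a, b, c, d, hdet, hTtri, hTset, hcard, hd⟩ := hT
    have hset : triPts a b c = {a, b, c, d} := by rw [← hTtri, hTset]
    obtain ⟨⟨hc1, hc2⟩, h12, h13, h23⟩ := internal_structure hdet hset hd
    have hab : a ≠ b := by
      intro he
      exact h12 ⟨by rw [he]; simp, by rw [he]; simp⟩
    have hac : a ≠ c := by
      intro he
      exact h13 ⟨by rw [he]; simp, by rw [he]; simp⟩
    have hbc : b ≠ c := by
      intro he
      exact h23 ⟨by rw [he]; simp, by rw [he]; simp⟩
    have had : a ≠ d := by
      intro he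
      have e1 := congrArg Prod.fst he
      have e2 := congrArg Prod.snd he
      exact h23 ⟨by omega, by omega⟩
    have hbd : b ≠ d := by
      intro he
      have e1 := congrArg Prod.fst he
      have e2 := congrArg Prod.snd he
      exact h13 ⟨by omega, by omega⟩
    have hcd : c ≠ d := by
      intro he
      have e1 := congrArg Prod.fst he
      have e2 := congrArg Prod.snd he
      exact h12 ⟨by omega, by omega⟩
    have hmem : ∀ q, q ∈ ({a, b, c, d} : Set (ℤ × ℤ)) → q ≠ p → q ∈ J14 := by
      intro q hq hqp
      exact hsub ⟨by rw [hTset]; exact hq, by simpa using hqp⟩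
    have hpT : p = a ∨ p = b ∨ p = c ∨ p = d := by
      rw [hTset] at hp
      simpa using hp
    rcases hpT with rfl | rfl | rfl | rfl
    · exact helper_vertex p b c d hc1 hc2 h12 h13 h23
        (hmem b (by simp) (Ne.symm hab)) (hmem c (by simp) (Ne.symm hac))
        (hmem d (by simp) (Ne.symm had))
    · exact helper_vertex p a c d (by omega) (by omega) (by omega) (by omega) (by omega)
        (hmem a (by simp) hab) (hmem c (by simp) (Ne.symm hbc))
        (hmem d (by simp) (Ne.symm hbd))
    · exact helper_vertex p a b d (by omega) (by omega) (by omega) (by omega) (by omega)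
        (hmem a (by simp) hac) (hmem b (by simp) hbc)
        (hmem d (by simp) (Ne.symm hcd))
    · exact helper_centroid a b c p hc1 hc2 h12 h13 h23
        (hmem a (by simp) had) (hmem b (by simp) hbd)
        (hmem c (by simp) hcd)
  · exact density14
end
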